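/- arXiv:1512.06355 — 8 statements merged into one kernel-verified Lean document; each statement's English description precedes it below -/
import Mathlib

section
/- Let K be a field of characteristic zero, let m be a natural number, and let γ : MvPolynomial (Fin m) K → ((Fin m → Fin 2) → K) be the K-algebra homomorphism sending a polynomial f to the function v ↦ eval (fun i => if v i = 0 then (0:K) else 1) f (i.e. evaluation of f at all points of {0,1}^m ⊆ K^m). Then the kernel of γ equals the ideal I_m of MvPolynomial (Fin m) K generated by the polynomials X i ^ 2 - X i for i : Fin m. Consequently the algebra of K-valued polynomial functions on {0,1}^m is isomorphic to MvPolynomial (Fin m) K ⧸ I_m. -/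
set_option maxHeartbeats 1000000
set_option synthInstance.maxHeartbeats 1000000

open MvPolynomial

section Aux

variable (K : Type*) [Field K] (m : ℕ)

/-- The ideal generated by `X i ^ 2 - X i`. -/
noncomputable def auxIdeal : Ideal (MvPolynomial (Fin m) K) :=
  Ideal.span (Set.range fun i : Fin m => X i ^ 2 - X i)

lemma aux_mk_X_pow (i : Fin m) (k : ℕ) (hk : 1 ≤ k) :
    Ideal.Quotient.mk (auxIdeal K m) (X i ^ k) = Ideal.Quotient.mk (auxIdeal K m) (X i) := by
  induction k with
  | zero => omega
  | succ n ih =>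
    rcases Nat.lt_or_ge n 1 with hn | hn
    · interval_cases n
      simp
    · have key : (X i : MvPolynomial (Fin m) K) ^ (n + 1)
          = X i ^ (n - 1) * (X i ^ 2 - X i) + X i ^ n := by
        obtain ⟨p, rfl⟩ := Nat.exists_eq_add_of_le hn
        ring_nf
        rw [show 1 + p - 1 = p from by omega]
        ring
      rw [key, map_add, ih hn]
      have hz : Ideal.Quotient.mk (auxIdeal K m) (X i ^ (n - 1) * (X i ^ 2 - X i)) = 0 := by
        rw [Ideal.Quotient.eq_zero_iff_mem]
        exact Ideal.mul_mem_left _ _ (Ideal.subset_span ⟨i, rfl⟩)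
      rw [hz, zero_add]

lemma aux_span_top :
    Submodule.span K (Set.range fun s : Finset (Fin m) =>
      Ideal.Quotient.mk (auxIdeal K m) (∏ i ∈ s, X i)) = ⊤ := by
  classical
  rw [eq_top_iff]
  rintro q -
  obtain ⟨f, rfl⟩ := Ideal.Quotient.mk_surjective q
  rw [← Ideal.Quotient.mkₐ_eq_mk K, f.as_sum, map_sum]
  refine Submodule.sum_mem _ fun d hd => ?_
  have h1 : (monomial d) (coeff d f) = coeff d f • (monomial d 1) := by
    rw [smul_monomial, smul_eq_mul, mul_one]
  rw [h1, map_smul]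
  refine Submodule.smul_mem _ _ (Submodule.subset_span ?_)
  refine ⟨d.support, ?_⟩
  show Ideal.Quotient.mk (auxIdeal K m) (∏ i ∈ d.support, X i) = _
  rw [Ideal.Quotient.mkₐ_eq_mk, monomial_eq, Finsupp.prod, map_one, one_mul, map_prod, map_prod]
  refine Finset.prod_congr rfl fun i hi => ?_
  exact (aux_mk_X_pow K m i (d i) (Finsupp.mem_support_iff.mp hi |> Nat.one_le_iff_ne_zero.mpr)).symm

end Aux

/-- Let `K` be a field of characteristic zero and `m : ℕ`. Let
`γ : MvPolynomial (Fin m) K →ₐ[K] ((Fin m → Fin 2) → K)` be the `K`-algebra homomorphism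
sending a polynomial `f` to the function `v ↦ eval (fun i => if v i = 0 then 0 else 1) f`
(evaluation of `f` at all points of `{0,1}^m ⊆ K^m`).  Then the kernel of `γ` equals the
ideal generated by the polynomials `X i ^ 2 - X i` for `i : Fin m`. -/
theorem stmt_0 (K : Type*) [Field K] [CharZero K] (m : ℕ)
    (γ : MvPolynomial (Fin m) K →ₐ[K] ((Fin m → Fin 2) → K))
    (hγ : ∀ (f : MvPolynomial (Fin m) K) (v : Fin m → Fin 2),
      γ f v = MvPolynomial.eval (fun i => if v i = 0 then (0 : K) else 1) f) :
    RingHom.ker (γ : MvPolynomial (Fin m) K →+* ((Fin m → Fin 2) → K)) =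
      Ideal.span (Set.range fun i : Fin m =>
        MvPolynomial.X i ^ 2 - MvPolynomial.X i) := by
  classical
  have fin2 : ∀ a : Fin 2, a = 0 ∨ a = 1 := by decide
  -- the ideal is contained in the kernel
  have hIker : ∀ a ∈ auxIdeal K m, γ a = 0 := by
    have hle : auxIdeal K m ≤ RingHom.ker (γ : MvPolynomial (Fin m) K →+* ((Fin m → Fin 2) → K)) := by
      rw [auxIdeal, Ideal.span_le]
      rintro p ⟨i, rfl⟩
      have : γ (X i ^ 2 - X i) = 0 := by
        funext v
        rw [map_sub, map_pow, Pi.zero_apply, Pi.sub_apply, Pi.pow_apply, hγ]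
        simp only [eval_X]
        split_ifs <;> ring
      exact this
    intro a ha
    exact hle ha
  -- γ is surjective
  have hsurj : Function.Surjective γ := by
    intro g
    refine ⟨∑ v : Fin m → Fin 2, C (g v) * ∏ i : Fin m, (if v i = 0 then 1 - X i else X i), ?_⟩
    funext w
    rw [hγ]
    rw [map_sum]
    have hterm : ∀ v : Fin m → Fin 2,
        MvPolynomial.eval (fun i => if w i = 0 then (0:K) else 1)
          (C (g v) * ∏ i : Fin m, (if v i = 0 then 1 - X i else X i))
        = g v * (if v = w then 1 else 0) := by
      intro v
      rw [map_mul, eval_C, map_prod]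
      congr 1
      have hfac : ∀ i : Fin m,
          MvPolynomial.eval (fun i => if w i = 0 then (0:K) else 1)
            (if v i = 0 then 1 - X i else X i) = if v i = w i then 1 else 0 := by
        intro i
        rcases fin2 (v i) with hv | hv <;> rcases fin2 (w i) with hw | hw <;>
          simp [hv, hw]
      rw [Finset.prod_congr rfl fun i _ => hfac i, Finset.prod_boole]
      simp only [_root_.funext_iff, Finset.mem_univ, true_implies]
    rw [Finset.sum_congr rfl fun v _ => hterm v]
    simp
  -- set up the quotient
  set Q := MvPolynomial (Fin m) K ⧸ auxIdeal K m
  let γQ : Q →ₐ[K] ((Fin m → Fin 2) → K) := Ideal.Quotient.liftₐ (auxIdeal K m) γ hIker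
  have hγQ : ∀ f, γQ (Ideal.Quotient.mk (auxIdeal K m) f) = γ f := fun f => rfl
  have hQsurj : Function.Surjective γQ := by
    intro g
    obtain ⟨f, hf⟩ := hsurj g
    exact ⟨Ideal.Quotient.mk _ f, by rw [hγQ, hf]⟩
  haveI : Module.Finite K Q := by
    refine ⟨⟨Finset.univ.image (fun s : Finset (Fin m) =>
      Ideal.Quotient.mk (auxIdeal K m) (∏ i ∈ s, X i)), ?_⟩⟩
    rw [Finset.coe_image, Finset.coe_univ, Set.image_univ]
    exact aux_span_top K m
  have hrankQ : Module.finrank K Q ≤ 2 ^ m := by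
    have := finrank_le_of_span_eq_top (aux_span_top K m)
    simpa using this
  have hrankF : Module.finrank K ((Fin m → Fin 2) → K) = 2 ^ m := by
    rw [Module.finrank_fintype_fun_eq_card]
    simp
  have hker : LinearMap.ker γQ.toLinearMap = ⊥ := by
    have hrn := LinearMap.finrank_range_add_finrank_ker γQ.toLinearMap
    have hrange : LinearMap.range γQ.toLinearMap = ⊤ :=
      LinearMap.range_eq_top.mpr hQsurj
    rw [hrange, finrank_top, hrankF] at hrn
    have : Module.finrank K (LinearMap.ker γQ.toLinearMap) = 0 := by omega
    exact Submodule.finrank_eq_zero.mp this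
  -- conclude
  apply le_antisymm
  · intro f hf
    have h0 : γ f = 0 := hf
    have : Ideal.Quotient.mk (auxIdeal K m) f ∈ LinearMap.ker γQ.toLinearMap := by
      simp only [LinearMap.mem_ker, AlgHom.toLinearMap_apply, hγQ, h0]
    rw [hker, Submodule.mem_bot] at this
    exact Ideal.Quotient.eq_zero_iff_mem.mp this
  · rw [Ideal.span_le]
    rintro p hp
    have : p ∈ auxIdeal K m := Ideal.subset_span hp
    exact hIker p this
end

section
/- Let K be a field of characteristic zero, ι a finite type, and G a finite group acting on ι; let G act on MvPolynomial ι K by renaming variables (g • f = rename (g • ·) f). Let I be the ideal of MvPolynomial ι K generated by {X i ^ 2 - X i | i : ι} (note I is stable under the G-action). Then for every f ∈ MvPolynomial ι K such that rename (g • ·) f - f ∈ I for all g ∈ G, there exists h ∈ MvPolynomial ι K with rename (g • ·) h = h for all g ∈ G and f - h ∈ I. In other words, every G-invariant element of the quotient MvPolynomial ι K ⧸ I lifts to a G-invariant polynomial, so the invariant algebra of the quotient is the image of the invariant algebra MvPolynomial ι K^G under the quotient map. -/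
/-- Let `K` be a field of characteristic zero, `ι` a finite type, and `G` a
finite group acting on `ι`; `G` acts on `MvPolynomial ι K` by renaming variables.  Let `I` be
the ideal generated by `{X i ^ 2 - X i | i : ι}`.  Then every `G`-invariant element of the
quotient `MvPolynomial ι K ⧸ I` lifts to a `G`-invariant polynomial: for every `f` with
`rename (g • ·) f - f ∈ I` for all `g ∈ G`, there is `h` with `rename (g • ·) h = h` for all
`g` and `f - h ∈ I`. -/
theorem stmt_1 (K : Type*) [Field K] [CharZero K] (ι : Type*) [Fintype ι]
    (G : Type*) [Group G] [Fintype G] [MulAction G ι]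
    (I : Ideal (MvPolynomial ι K))
    (hI : I = Ideal.span (Set.range fun i : ι => MvPolynomial.X i ^ 2 - MvPolynomial.X i))
    (f : MvPolynomial ι K)
    (hf : ∀ g : G, MvPolynomial.rename (fun i : ι => g • i) f - f ∈ I) :
    ∃ h : MvPolynomial ι K,
      (∀ g : G, MvPolynomial.rename (fun i : ι => g • i) h = h) ∧ f - h ∈ I := by
  clear hI
  set c : K := (Fintype.card G : K) with hc
  have hc0 : c ≠ 0 := Nat.cast_ne_zero.mpr Fintype.card_ne_zero
  refine ⟨c⁻¹ • ∑ g : G, MvPolynomial.rename (fun i : ι => g • i) f, ?_, ?_⟩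
  · intro g
    rw [map_smul, map_sum]
    congr 1
    have key : ∀ g' : G,
        MvPolynomial.rename (fun i : ι => g • i)
          (MvPolynomial.rename (fun i : ι => g' • i) f)
        = MvPolynomial.rename (fun i : ι => (g * g') • i) f := by
      intro g'
      rw [MvPolynomial.rename_rename]
      have : ((fun i : ι => g • i) ∘ fun i : ι => g' • i) = fun i : ι => (g * g') • i :=
        funext fun i => (mul_smul g g' i).symm
      rw [this]
    simp_rw [key]
    exact Fintype.sum_equiv (Equiv.mulLeft g) _ _ (fun g' => rfl)
  · have : f - c⁻¹ • ∑ g : G, MvPolynomial.rename (fun i : ι => g • i) f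
        = c⁻¹ • ∑ g : G, (f - MvPolynomial.rename (fun i : ι => g • i) f) := by
      rw [Finset.sum_sub_distrib, smul_sub]
      congr 1
      rw [Finset.sum_const, Finset.card_univ, ← Nat.cast_smul_eq_nsmul K, smul_smul,
        inv_mul_cancel₀ hc0, one_smul]
    rw [this]
    have hmem : (∑ g : G, (f - MvPolynomial.rename (fun i : ι => g • i) f)) ∈ I :=
      Ideal.sum_mem _ fun g _ => by
        have := I.neg_mem (hf g); simpa [neg_sub] using this
    rw [MvPolynomial.smul_eq_C_mul]
    exact I.mul_mem_left _ hmem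
end

section
/- Fix natural numbers n and i, and let K be a field of characteristic zero. Let E := {e : Sym2 (Fin n) // ¬ e.IsDiag} be the set of potential edges on n vertices, with the symmetric group Equiv.Perm (Fin n) acting on E via σ • e = Sym2.map σ e. Let S_n act on i-element subsets of E accordingly. Then the K-dimension of the vector space { f : {s : Finset E // s.card = i} → K | f (σ • s) = f s for all σ ∈ Equiv.Perm (Fin n) and all s } equals the number of isomorphism classes of simple graphs on the vertex set Fin n having exactly i edges, i.e. the cardinality of the quotient of {G : SimpleGraph (Fin n) // G.edgeFinset.card = i} by the equivalence relation G ~ G' ↔ Nonempty (G ≃g G'). -/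
/-- The set of potential edges on `n` vertices: unordered pairs of distinct elements
of `Fin n`. -/
abbrev Edges (n : ℕ) : Type := {e : Sym2 (Fin n) // ¬ e.IsDiag}

/-- The action of a permutation `σ` of the vertices on the set of potential edges,
`σ • e = Sym2.map σ e`. -/
def edgePerm {n : ℕ} (σ : Equiv.Perm (Fin n)) : Equiv.Perm (Edges n) where
  toFun e := ⟨Sym2.map σ e.1, fun h => e.2 ((Sym2.isDiag_map σ.injective).mp h)⟩
  invFun e := ⟨Sym2.map σ.symm e.1, fun h => e.2 ((Sym2.isDiag_map σ.symm.injective).mp h)⟩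
  left_inv e := Subtype.ext (by simp [Sym2.map_map])
  right_inv e := Subtype.ext (by simp [Sym2.map_map])

/-- The induced action of a vertex permutation on `i`-element subsets of the edge set. -/
def permEdgeSubset {n i : ℕ} (σ : Equiv.Perm (Fin n))
    (s : {s : Finset (Edges n) // s.card = i}) : {s : Finset (Edges n) // s.card = i} :=
  ⟨s.1.image (edgePerm σ), by
    rw [Finset.card_image_of_injective _ (edgePerm σ).injective, s.2]⟩

/-- The subspace of `K`-valued functions on `i`-element subsets of the edge set that are
invariant under all vertex permutations. -/
def invariantFunctions (K : Type*) [Field K] (n i : ℕ) :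
    Submodule K ({s : Finset (Edges n) // s.card = i} → K) where
  carrier := {f | ∀ (σ : Equiv.Perm (Fin n)) (s : {s : Finset (Edges n) // s.card = i}),
    f (permEdgeSubset σ s) = f s}
  add_mem' := fun ha hb σ s => by simp [ha σ s, hb σ s]
  zero_mem' := fun σ s => rfl
  smul_mem' := fun c f hf σ s => by simp [hf σ s]

open scoped Classical in
/-- Isomorphism of simple graphs with `n` vertices and `i` edges, as an equivalence
relation. -/
noncomputable def graphIsoSetoid (n i : ℕ) :
    Setoid {G : SimpleGraph (Fin n) // G.edgeFinset.card = i} where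
  r G G' := Nonempty (G.1 ≃g G'.1)
  iseqv := ⟨fun _ => ⟨RelIso.refl _⟩, fun ⟨φ⟩ => ⟨φ.symm⟩, fun ⟨φ⟩ ⟨ψ⟩ => ⟨φ.trans ψ⟩⟩


open Finset

variable {n i : ℕ}

lemma permEdgeSubset_one (s : {s : Finset (Edges n) // s.card = i}) :
    permEdgeSubset 1 s = s := by
  have h : edgePerm (1 : Equiv.Perm (Fin n)) = 1 :=
    Equiv.ext fun e => Subtype.ext (by simp [edgePerm])
  apply Subtype.ext
  simp [permEdgeSubset, h]

lemma permEdgeSubset_mul (σ τ : Equiv.Perm (Fin n)) (s : {s : Finset (Edges n) // s.card = i}) :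
    permEdgeSubset σ (permEdgeSubset τ s) = permEdgeSubset (σ * τ) s := by
  apply Subtype.ext
  simp only [permEdgeSubset, Finset.image_image]
  apply Finset.image_congr
  intro e _
  exact Subtype.ext (by simp [edgePerm, Sym2.map_map])

/-- orbit setoid on i-subsets of edges -/
def edgeSetoid (n i : ℕ) : Setoid {s : Finset (Edges n) // s.card = i} where
  r s t := ∃ σ : Equiv.Perm (Fin n), permEdgeSubset σ s = t
  iseqv := by
    refine ⟨fun s => ⟨1, permEdgeSubset_one s⟩, ?_, ?_⟩
    · rintro s t ⟨σ, rfl⟩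
      exact ⟨σ⁻¹, by rw [permEdgeSubset_mul, inv_mul_cancel, permEdgeSubset_one]⟩
    · rintro s t u ⟨σ, rfl⟩ ⟨τ, rfl⟩
      exact ⟨τ * σ, (permEdgeSubset_mul τ σ s).symm⟩

open scoped Classical


noncomputable def invFunEquiv (K : Type*) [Field K] (n i : ℕ) :
    invariantFunctions K n i ≃ₗ[K] (Quotient (edgeSetoid n i) → K) where
  toFun f := Quotient.lift f.1 (by rintro s t ⟨σ, rfl⟩; exact (f.2 σ s).symm)
  map_add' f g := by funext q; induction q using Quotient.ind; rfl
  map_smul' c f := by funext q; induction q using Quotient.ind; rfl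
  invFun g := ⟨fun s => g (Quotient.mk (edgeSetoid n i) s), fun σ s =>
    congrArg g (Quotient.sound (⟨σ, rfl⟩ : (edgeSetoid n i).r s (permEdgeSubset σ s))).symm⟩
  left_inv f := rfl
  right_inv g := by funext q; induction q using Quotient.ind; rfl

noncomputable def subOfGraph {n : ℕ} (G : SimpleGraph (Fin n)) : Finset (Edges n) :=
  Finset.univ.filter (fun e => e.1 ∈ G.edgeSet)

lemma imval_subOfGraph {n : ℕ} (G : SimpleGraph (Fin n)) :
    (subOfGraph G).image Subtype.val = G.edgeFinset := by
  ext e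
  simp only [subOfGraph, Finset.mem_image, Finset.mem_filter, Finset.mem_univ, true_and,
    SimpleGraph.mem_edgeFinset]
  constructor
  · rintro ⟨a, ha, rfl⟩; exact ha
  · intro he; exact ⟨⟨e, G.not_isDiag_of_mem_edgeSet he⟩, he, rfl⟩

lemma card_subOfGraph {n : ℕ} (G : SimpleGraph (Fin n)) :
    (subOfGraph G).card = G.edgeFinset.card := by
  rw [← imval_subOfGraph G, Finset.card_image_of_injective _ Subtype.val_injective]

noncomputable def graphOfSub {n : ℕ} (s : Finset (Edges n)) : SimpleGraph (Fin n) :=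
  SimpleGraph.fromEdgeSet ↑(s.image Subtype.val)

lemma edgeSet_graphOfSub {n : ℕ} (s : Finset (Edges n)) :
    (graphOfSub s).edgeSet = ↑(s.image Subtype.val) := by
  rw [graphOfSub, SimpleGraph.edgeSet_fromEdgeSet]
  ext e
  simp only [Set.mem_diff, Finset.coe_image, Set.mem_image, Finset.mem_coe, Set.mem_setOf_eq]
  constructor
  · exact fun h => h.1
  · rintro ⟨a, ha, rfl⟩; exact ⟨⟨a, ha, rfl⟩, a.2⟩

lemma edgeFinset_graphOfSub {n : ℕ} (s : Finset (Edges n)) :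
    (graphOfSub s).edgeFinset = s.image Subtype.val := by
  ext e
  rw [SimpleGraph.mem_edgeFinset, edgeSet_graphOfSub]
  simp

lemma graphOfSub_subOfGraph {n : ℕ} (G : SimpleGraph (Fin n)) :
    graphOfSub (subOfGraph G) = G := by
  rw [graphOfSub, imval_subOfGraph, SimpleGraph.coe_edgeFinset, SimpleGraph.fromEdgeSet_edgeSet]

lemma subOfGraph_graphOfSub {n : ℕ} (s : Finset (Edges n)) :
    subOfGraph (graphOfSub s) = s := by
  apply Finset.image_injective Subtype.val_injective
  rw [imval_subOfGraph, edgeFinset_graphOfSub]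

noncomputable def graphEquiv (n i : ℕ) :
    {G : SimpleGraph (Fin n) // G.edgeFinset.card = i} ≃ {s : Finset (Edges n) // s.card = i} where
  toFun G := ⟨subOfGraph G.1, by rw [card_subOfGraph, G.2]⟩
  invFun s := ⟨graphOfSub s.1, by
    rw [edgeFinset_graphOfSub, Finset.card_image_of_injective _ Subtype.val_injective, s.2]⟩
  left_inv G := Subtype.ext (graphOfSub_subOfGraph G.1)
  right_inv s := Subtype.ext (subOfGraph_graphOfSub s.1)

lemma mem_image_sym2 {n : ℕ} (σ : Equiv.Perm (Fin n)) (s : Finset (Sym2 (Fin n)))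
    (e : Sym2 (Fin n)) : e ∈ s.image (Sym2.map σ) ↔ Sym2.map σ.symm e ∈ s := by
  rw [Finset.mem_image]
  constructor
  · rintro ⟨x, hx, rfl⟩
    simpa [Sym2.map_map] using hx
  · intro h
    exact ⟨_, h, by simp [Sym2.map_map]⟩

lemma image_eq_iff {n : ℕ} (G G' : SimpleGraph (Fin n)) (σ : Equiv.Perm (Fin n)) :
    G.edgeFinset.image (Sym2.map σ) = G'.edgeFinset ↔
      ∀ a b, G.Adj a b ↔ G'.Adj (σ a) (σ b) := by
  constructor
  · intro h a b
    have := (mem_image_sym2 σ G.edgeFinset s(σ a, σ b))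
    rw [h] at this
    simpa [SimpleGraph.mem_edgeFinset] using this.symm
  · intro h
    ext e
    induction e using Sym2.ind with
    | _ a b =>
      rw [mem_image_sym2]
      simp only [Sym2.map_pair_eq, SimpleGraph.mem_edgeFinset, SimpleGraph.mem_edgeSet]
      rw [h (σ.symm a) (σ.symm b)]
      simp

lemma iso_iff {n : ℕ} (G G' : SimpleGraph (Fin n)) :
    Nonempty (G ≃g G') ↔
      ∃ σ : Equiv.Perm (Fin n), G.edgeFinset.image (Sym2.map σ) = G'.edgeFinset := by
  constructor
  · rintro ⟨φ⟩
    exact ⟨φ.toEquiv, (image_eq_iff _ _ _).mpr fun a b => φ.map_rel_iff.symm⟩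
  · rintro ⟨σ, h⟩
    exact ⟨⟨σ, fun {a b} => ((image_eq_iff G G' σ).mp h a b).symm⟩⟩

lemma imval_perm {n : ℕ} (σ : Equiv.Perm (Fin n)) (s : Finset (Edges n)) :
    (s.image (edgePerm σ)).image Subtype.val = (s.image Subtype.val).image (Sym2.map σ) := by
  rw [Finset.image_image, Finset.image_image]
  rfl


lemma key {n i : ℕ} (G G' : {G : SimpleGraph (Fin n) // G.edgeFinset.card = i}) :
    (graphIsoSetoid n i).r G G' ↔
      (edgeSetoid n i).r (graphEquiv n i G) (graphEquiv n i G') := by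
  rw [show (graphIsoSetoid n i).r G G' = Nonempty (G.1 ≃g G'.1) from rfl, iso_iff]
  refine exists_congr fun σ => ?_
  constructor
  · intro hσ
    refine Subtype.ext ?_
    apply Finset.image_injective Subtype.val_injective
    show ((subOfGraph G.1).image (edgePerm σ)).image Subtype.val
      = (subOfGraph G'.1).image Subtype.val
    rw [imval_perm, imval_subOfGraph, imval_subOfGraph, hσ]
  · intro hσ
    have h2 := congrArg (fun t => Finset.image Subtype.val t.1) hσ
    simp only [permEdgeSubset, graphEquiv, Equiv.coe_fn_mk] at h2
    rw [imval_perm, imval_subOfGraph, imval_subOfGraph] at h2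
    exact h2


/-- Theorem 2 of the paper.  The dimension of the space of
vertex-permutation invariant `K`-valued functions on `i`-element subsets of the edge set
equals the number of isomorphism classes of simple graphs on `n` vertices with `i` edges. -/
theorem stmt_2 (n i : ℕ) (K : Type*) [Field K] [CharZero K] :
    Module.finrank K (invariantFunctions K n i) =
      Nat.card (Quotient (graphIsoSetoid n i)) := by
  have : Fintype (Quotient (edgeSetoid n i)) := Fintype.ofFinite _
  rw [(invFunEquiv K n i).finrank_eq, Module.finrank_pi, ← Nat.card_eq_fintype_card]
  exact (Nat.card_congr (Quotient.congr (graphEquiv n i) key)).symm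
end

section
/- Fix n, and let E := {e : Sym2 (Fin n) // ¬ e.IsDiag} with the action of Equiv.Perm (Fin n) given by σ • e = Sym2.map σ e; let m := Fintype.card E = n(n-1)/2. For each i ≤ m let a_{n,i} be the number of isomorphism classes of simple graphs on Fin n with exactly i edges (the cardinality of the quotient of {G : SimpleGraph (Fin n) // G.edgeFinset.card = i} by G ~ G' ↔ Nonempty (G ≃g G')). For σ ∈ Equiv.Perm (Fin n), let P σ : Matrix E E (RatFunc ℚ) be the permutation matrix of the permutation e ↦ σ • e of E. Then, in the field of rational functions RatFunc ℚ with variable X: (n! : RatFunc ℚ) * ∑_{i=0}^{m} (a_{n,i} : RatFunc ℚ) * X^i = ∑_{σ ∈ Equiv.Perm (Fin n)} det(1 - X^2 • P σ) / det(1 - X • P σ), where 1 denotes the identity m×m matrix and each denominator det(1 - X • P σ) is nonzero. -/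
set_option maxHeartbeats 1000000
set_option synthInstance.maxHeartbeats 400000

/-- The permutation matrix (with entries in a semiring `R`) of the permutation
`e ↦ σ • e` of the edge set induced by a vertex permutation `σ`. -/
def permMat (n : ℕ) (R : Type*) [Semiring R] (σ : Equiv.Perm (Fin n)) :
    Matrix (Edges n) (Edges n) R :=
  Matrix.of fun e f => if edgePerm σ f = e then 1 else 0

/-!
By Burnside's lemma for the action of `S_n` on `i`-sets of edges,
`n! a_{n,i} = ∑_σ #{S : |S| = i, σ S = S}`, so `n! g_n(x) = ∑_σ ∑_{σ S = S} x^{|S|}`.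
For a permutation `π` with cycle lengths `ℓ_j`, the invariant sets are the unions of cycles, so
the inner sum is `∏ (1 + x^{ℓ_j})`, while `det (1 - x P_π) = ∏ (1 - x^{ℓ_j})`. Hence
`det (1 - x² P_π) = det (1 - x P_π) ∑_{π S = S} x^{|S|}`. Both sides of this identity are
multiplicative when the ground set is split into two `π`-invariant parts, which reduces it to a
single cycle; there only `1` and `π` survive in the Leibniz expansion of the determinant.
-/

open Equiv Finset Matrix MulAction Polynomial
open scoped Pointwise

namespace Equiv.Perm

lemma smul_finset_eq_self_iff {F : Type*} [DecidableEq F] {π : Perm F} {S : Finset F} :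
    π • S = S ↔ ∀ a, π a ∈ S ↔ a ∈ S := by
  refine ⟨fun h a => ?_, fun h => Finset.ext fun a => ?_⟩
  · conv_lhs => rw [← h]
    exact smul_mem_smul_finset_iff π
  · simpa [← inv_smul_mem_iff] using (h (π⁻¹ a)).symm

variable {F : Type*} [Fintype F]

lemma eq_empty_or_eq_univ_of_sameCycle {π : Perm F} (hπ : ∀ a b, π.SameCycle a b)
    {S : Finset F} (hS : ∀ a ∈ S, π a ∈ S) : S = ∅ ∨ S = univ := by
  rcases S.eq_empty_or_nonempty with h | ⟨a, ha⟩
  · exact .inl h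
  refine .inr (eq_univ_of_forall fun b => ?_)
  obtain ⟨k, rfl⟩ := (hπ a b).exists_nat_pow_eq
  induction k with
  | zero => exact ha
  | succ k ih => rw [pow_succ', mul_apply]; exact hS _ ih

variable [DecidableEq F]

lemma eq_one_or_eq_of_forall_apply_eq_or_eq {π τ : Perm F} (hπ : ∀ a b, π.SameCycle a b)
    (hfix : ∀ a, π a ≠ a) (hτ : ∀ a, τ a = a ∨ τ a = π a) : τ = 1 ∨ τ = π := by
  have hS : ∀ a ∈ ({a | τ a = π a} : Finset F), π a ∈ ({a | τ a = π a} : Finset F) := by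
    simp only [mem_filter, mem_univ, true_and]
    exact fun a ha => (hτ (π a)).resolve_left fun h => hfix a (τ.injective (h.trans ha.symm))
  rcases eq_empty_or_eq_univ_of_sameCycle hπ hS with h | h
  · refine .inl (Perm.ext fun a => (hτ a).resolve_right fun ha => ?_)
    simpa [ha] using eq_empty_iff_forall_notMem.mp h a
  · exact .inr (Perm.ext fun a => by simpa using eq_univ_iff_forall.mp h a)

section InvariantSubsetSum
variable {R : Type*} [CommSemiring R]

def invariantSubsetSum (x : R) (π : Perm F) : R := ∑ S : Finset F with π • S = S, x ^ #S

lemma invariantSubsetSum_of_sameCycle [Nonempty F] {π : Perm F}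
    (hπ : ∀ a b, π.SameCycle a b) (x : R) :
    invariantSubsetSum x π = 1 + x ^ Fintype.card F := by
  have hfixed : ({S | π • S = S} : Finset (Finset F)) = {∅, univ} := by
    ext S
    simp only [mem_filter, mem_univ, true_and, mem_insert, mem_singleton]
    refine ⟨fun hS => eq_empty_or_eq_univ_of_sameCycle hπ fun a ha => ?_, ?_⟩
    · rw [← hS, ← Perm.smul_def]; exact smul_mem_smul_finset ha
    · rintro (rfl | rfl) <;> simp
  rw [invariantSubsetSum, hfixed, sum_pair univ_nonempty.ne_empty.symm, card_empty, card_univ,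
    pow_zero]

lemma invariantSubsetSum_eq_mul {p : F → Prop} [DecidablePred p] (π : Perm F)
    (hp : ∀ a, p (π a) ↔ p a) (x : R) :
    invariantSubsetSum x π =
      invariantSubsetSum x (π.subtypePerm hp) *
        invariantSubsetSum x (π.subtypePerm (p := (¬p ·)) fun a => (hp a).not) := by
  rw [invariantSubsetSum, invariantSubsetSum, invariantSubsetSum, sum_mul_sum, ← sum_product']
  refine sum_nbij' (fun S => (S.subtype p, S.subtype (¬p ·)))
    (fun T => T.1.map (Function.Embedding.subtype _) ∪ T.2.map (Function.Embedding.subtype _))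
    ?_ ?_ ?_ ?_ ?_
  · intro S hS
    simp only [mem_filter, mem_univ, true_and, smul_finset_eq_self_iff] at hS
    simpa [smul_finset_eq_self_iff] using ⟨fun a _ => hS a, fun a _ => hS a⟩
  · intro T hT
    simp only [mem_product, mem_filter, mem_univ, true_and, smul_finset_eq_self_iff] at hT ⊢
    intro a
    by_cases ha : p a
    · simpa [ha, (hp a).2 ha] using hT.1 ⟨a, ha⟩
    · simpa [ha, mt (hp a).1 ha] using hT.2 ⟨a, ha⟩
  · intro S _
    simp [subtype_map, filter_union_filter_not_eq]
  · rintro ⟨A, B⟩ _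
    ext ⟨a, ha⟩ <;> simp [ha]
  · intro S _
    rw [← pow_add, card_subtype, card_subtype, card_filter_add_card_filter_not]

end InvariantSubsetSum

section Determinant
variable {R : Type*} [CommRing R]

lemma det_one_sub_smul_permMatrix_of_sameCycle [Nonempty F] {π : Perm F}
    (hπ : ∀ a b, π.SameCycle a b) (x : R) :
    det (1 - x • π.permMatrix R) = 1 - x ^ Fintype.card F := by
  obtain ⟨a⟩ := ‹Nonempty F›
  by_cases h1 : π = 1
  · have hcard : Fintype.card F = 1 := Fintype.card_eq_one_iff.mpr
      ⟨a, fun b => by simpa [h1] using (hπ a b).symm⟩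
    rw [h1, permMatrix_one, show (1 : Matrix F F R) - x • 1 = (1 - x) • 1 by
      rw [sub_smul, one_smul], det_smul, det_one, hcard]
    ring
  have hfix : ∀ b, π b ≠ b := fun b hb => h1 <| Equiv.ext fun c =>
    ((hπ b c).apply_eq_self_iff).mp hb
  have hsign : (sign π : R) = -(-1) ^ Fintype.card F := by
    have hsupp : π.support = univ := by ext; simp [hfix]
    rw [IsCycle.sign ⟨a, hfix a, fun b _ => hπ a b⟩, hsupp, card_univ]; push_cast; ring
  -- In the Leibniz expansion of `(1 - x P)ᵀ`, the term of `τ` vanishes unless every `τ i` is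
  -- `i` or `π i`, which for a single cycle leaves only `τ = 1` and `τ = π`.
  rw [← det_transpose, det_apply, Fintype.sum_eq_add 1 π (Ne.symm h1)]
  · simp [hfix, hsign, Units.smul_def, one_apply_ne' (hfix _), ← mul_pow, sub_eq_add_neg]
  · rintro τ ⟨hτ1, hτπ⟩
    obtain ⟨i, hi1, hiπ⟩ : ∃ i, τ i ≠ i ∧ τ i ≠ π i := by
      by_contra! h
      rcases eq_one_or_eq_of_forall_apply_eq_or_eq hπ hfix (fun i => or_iff_not_imp_left.mpr (h i))
        with h | h <;> contradiction
    rw [prod_eq_zero (mem_univ i), smul_zero]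
    simp [one_apply_ne' hi1, Ne.symm hiπ]

lemma det_one_sub_smul_permMatrix_eq_mul {p : F → Prop} [DecidablePred p] (π : Perm F)
    (hp : ∀ a, p (π a) ↔ p a) (x : R) :
    det (1 - x • π.permMatrix R) =
      det (1 - x • (π.subtypePerm hp).permMatrix R) *
        det (1 - x • (π.subtypePerm (p := (¬p ·)) fun a => (hp a).not).permMatrix R) := by
  have hblocks : (1 - x • π.permMatrix R).submatrix (sumCompl p) (sumCompl p) =
      fromBlocks (1 - x • (π.subtypePerm hp).permMatrix R) 0 0
        (1 - x • (π.subtypePerm (p := (¬p ·)) fun a => (hp a).not).permMatrix R) := by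
    ext (i | i) (j | j)
    · simp [Matrix.one_apply, Subtype.ext_iff]
    · have hij : (i : F) ≠ j := fun h => j.2 (h ▸ i.2)
      have : π i ≠ j := fun h => j.2 (h ▸ (hp i).2 i.2)
      simp [hij, this]
    · have hij : (i : F) ≠ j := fun h => i.2 (h ▸ j.2)
      have : π i ≠ j := fun h => i.2 ((hp i).1 (h ▸ j.2))
      simp [hij, this]
    · simp [Matrix.one_apply, Subtype.ext_iff]
  rw [← det_submatrix_equiv_self (sumCompl p), hblocks, det_fromBlocks_zero₂₁]

theorem det_one_sub_sq_smul_permMatrix (x : R) (π : Perm F) :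
    det (1 - x ^ 2 • π.permMatrix R) =
      det (1 - x • π.permMatrix R) * invariantSubsetSum x π := by
  induction h : Fintype.card F using Nat.strong_induction_on generalizing F with
  | _ N ih =>
  rcases isEmpty_or_nonempty F with hF | hF
  · simp [invariantSubsetSum, filter_singleton, Subsingleton.elim (default : Finset F) ∅]
  have ⟨a⟩ := hF
  by_cases hπ : ∀ b, π.SameCycle a b
  · have hπ' : ∀ b c, π.SameCycle b c := fun b c => (hπ b).symm.trans (hπ c)
    rw [det_one_sub_smul_permMatrix_of_sameCycle hπ',
      det_one_sub_smul_permMatrix_of_sameCycle hπ', invariantSubsetSum_of_sameCycle hπ']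
    ring
  obtain ⟨b, hb⟩ := not_forall.mp hπ
  have hp : ∀ c, π.SameCycle a (π c) ↔ π.SameCycle a c := fun c => sameCycle_apply_right
  have h₁ := Fintype.card_subtype_lt hb
  have h₂ := Fintype.card_subtype_lt (p := (¬π.SameCycle a ·)) (not_not.mpr (.refl π a))
  rw [det_one_sub_smul_permMatrix_eq_mul π hp, det_one_sub_smul_permMatrix_eq_mul π hp,
    invariantSubsetSum_eq_mul π hp, ih _ (h ▸ h₁) _ rfl, ih _ (h ▸ h₂) _ rfl]
  ring

end Determinant

end Equiv.Perm

lemma det_one_sub_X_smul_ne_zero {K ι : Type*} [Field K] [Fintype ι] [DecidableEq ι]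
    (M : Matrix ι ι K) :
    det (1 - (RatFunc.X : RatFunc K) • M.map (algebraMap K (RatFunc K))) ≠ 0 := by
  have hrev : det (1 - (RatFunc.X : RatFunc K) • M.map (algebraMap K (RatFunc K))) =
      algebraMap K[X] (RatFunc K) M.charpolyRev := by
    rw [charpolyRev, RingHom.map_det]
    congr 1
    ext i j
    simpa [Matrix.one_apply, apply_ite, RatFunc.algebraMap_C] using mul_comm _ _
  rw [hrev, map_ne_zero_iff _ (IsFractionRing.injective K[X] (RatFunc K))]
  intro h
  simpa [h] using M.eval_charpolyRev

section Burnside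
variable {G α : Type*} [Group G] [MulAction G α] [Fintype α] [DecidableEq α]

lemma card_fixedBy_powersetCard (g : G) (i : ℕ) :
    Fintype.card (fixedBy (Set.powersetCard α i) g) =
      #{S : Finset α | g • S = S ∧ #S = i} := by
  rw [← Fintype.card_subtype]
  refine Fintype.card_congr
    { toFun s := ⟨s.1.1, congrArg Subtype.val s.2, s.1.2⟩
      invFun S := ⟨⟨S.1, S.2.2⟩, Subtype.ext S.2.1⟩
      left_inv _ := rfl
      right_inv _ := rfl }

lemma sum_card_fixedBy_powersetCard_mul_pow {R : Type*} [CommSemiring R] (g : G) (x : R) :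
    ∑ i ∈ range (Fintype.card α + 1),
        (Fintype.card (fixedBy (Set.powersetCard α i) g) : R) * x ^ i =
      ∑ S : Finset α with g • S = S, x ^ #S := by
  rw [← sum_fiberwise_of_maps_to (g := card) (t := range (Fintype.card α + 1))
    fun S _ => mem_range.2 (Nat.lt_succ_of_le (card_le_univ S))]
  refine sum_congr rfl fun i _ => ?_
  rw [card_fixedBy_powersetCard, filter_filter,
    sum_congr rfl fun S hS => by rw [(mem_filter.1 hS).2.2], sum_const, nsmul_eq_mul]

end Burnside

lemma SimpleGraph.nonempty_iso_iff_exists_map_eq {V W : Type*} {G : SimpleGraph V}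
    {G' : SimpleGraph W} : Nonempty (G ≃g G') ↔ ∃ e : V ≃ W, G.map e.toEmbedding = G' := by
  refine ⟨fun ⟨φ⟩ => ⟨φ.toEquiv, ?_⟩, fun ⟨e, he⟩ => ⟨he ▸ Iso.map e G⟩⟩
  rw [← φ.toEquiv.symm_symm, map_symm]
  ext a b
  exact φ.symm.map_adj_iff

def edgePermHom (n : ℕ) : Perm (Fin n) →* Perm (Edges n) where
  toFun := edgePerm
  map_one' := by ext; simp [edgePerm]
  map_mul' σ τ := by ext; simp [edgePerm, Sym2.map_map]

instance (n : ℕ) : MulAction (Perm (Fin n)) (Edges n) := MulAction.compHom _ (edgePermHom n)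

lemma perm_smul_edge {n : ℕ} (σ : Perm (Fin n)) (e : Edges n) : σ • e = edgePerm σ e := rfl

lemma invariantSubsetSum_edgePerm {n : ℕ} {R : Type*} [CommSemiring R] (x : R) (σ : Perm (Fin n)) :
    (edgePerm σ).invariantSubsetSum x = ∑ S : Finset (Edges n) with σ • S = S, x ^ #S :=
  rfl

open scoped Classical in
noncomputable def graphEdgesEquiv (n : ℕ) : SimpleGraph (Fin n) ≃ Finset (Edges n) where
  toFun G := {e | e.1 ∈ G.edgeSet}
  invFun S := SimpleGraph.fromEdgeSet (Subtype.val '' (S : Set (Edges n)))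
  left_inv G := by
    ext v w
    simpa using G.ne_of_adj
  right_inv S := by
    ext e
    simp [e.2]

lemma card_graphEdgesEquiv {n : ℕ} (G : SimpleGraph (Fin n)) [Fintype G.edgeSet] :
    #(graphEdgesEquiv n G) = #G.edgeFinset := by
  rw [← card_map (Function.Embedding.subtype _)]
  congr 1
  ext e
  simpa [graphEdgesEquiv] using fun h => G.not_isDiag_of_mem_edgeSet h

lemma graphEdgesEquiv_map {n : ℕ} (σ : Perm (Fin n)) (G : SimpleGraph (Fin n)) :
    graphEdgesEquiv n (G.map σ.toEmbedding) = σ • graphEdgesEquiv n G := by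
  ext e
  simp only [graphEdgesEquiv, Equiv.coe_fn_mk, mem_filter, mem_univ, true_and, mem_smul_finset,
    SimpleGraph.edgeSet_map, perm_smul_edge, edgePerm, Subtype.ext_iff]
  constructor
  · rintro ⟨a, ha, hae⟩
    exact ⟨⟨a, G.not_isDiag_of_mem_edgeSet ha⟩, ha, hae⟩
  · rintro ⟨a, ha, hae⟩
    exact ⟨a, ha, hae⟩

open scoped Classical in
noncomputable def graphIsoQuotientEquiv (n i : ℕ) :
    Quotient (graphIsoSetoid n i) ≃
      MulAction.orbitRel.Quotient (Perm (Fin n)) (Set.powersetCard (Edges n) i) :=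
  Quotient.congr ((graphEdgesEquiv n).subtypeEquiv fun G => by
      rw [Set.powersetCard.mem_iff, card_graphEdgesEquiv]) fun G G' => by
    rw [MulAction.orbitRel_apply, MulAction.mem_orbit_iff]
    show Nonempty (G.1 ≃g G'.1) ↔ _
    simp only [Subtype.ext_iff, Set.powersetCard.coe_smul, Equiv.subtypeEquiv_apply,
      ← graphEdgesEquiv_map, (graphEdgesEquiv n).injective.eq_iff]
    rw [← SimpleGraph.nonempty_iso_iff_exists_map_eq]
    exact ⟨fun ⟨φ⟩ => ⟨φ.symm⟩, fun ⟨φ⟩ => ⟨φ.symm⟩⟩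

lemma permMat_eq_transpose {n : ℕ} (R : Type*) [Semiring R] (σ : Perm (Fin n)) :
    permMat n R σ = ((edgePerm σ).permMatrix R)ᵀ := by
  ext e f
  simp [permMat]

lemma det_one_sub_smul_permMat {n : ℕ} {R : Type*} [CommRing R] (x : R) (σ : Perm (Fin n)) :
    det (1 - x • permMat n R σ) = det (1 - x • (edgePerm σ).permMatrix R) := by
  rw [permMat_eq_transpose, ← det_transpose, transpose_sub, transpose_one, transpose_smul,
    transpose_transpose]

open scoped Classical in
lemma card_quotient_graphIsoSetoid_mul_factorial (n i : ℕ) :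
    Nat.card (Quotient (graphIsoSetoid n i)) * n.factorial =
      ∑ σ : Perm (Fin n), Fintype.card (fixedBy (Set.powersetCard (Edges n) i) σ) := by
  have hburnside := sum_card_fixedBy_eq_card_orbits_mul_card_group (Perm (Fin n))
    (Set.powersetCard (Edges n) i)
  rw [Fintype.card_perm, Fintype.card_fin] at hburnside
  rw [Nat.card_congr (graphIsoQuotientEquiv n i), Nat.card_eq_fintype_card, hburnside]

/-- Theorem 3(i) of the paper.  In the field of rational functions
`RatFunc ℚ`, with `a i` the number of isomorphism classes of simple graphs on `n` vertices
with `i` edges and `m = |E| = n(n-1)/2`,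
`n! ⬝ ∑ᵢ aᵢ Xⁱ = ∑_{σ} det(1 - X² P σ) / det(1 - X P σ)`, each denominator being nonzero. -/
theorem stmt_3 (n m : ℕ) (hm : m = Fintype.card (Edges n))
    (a : ℕ → ℕ) (ha : ∀ i, a i = Nat.card (Quotient (graphIsoSetoid n i))) :
    (∀ σ : Equiv.Perm (Fin n),
        Matrix.det (1 - (RatFunc.X : RatFunc ℚ) • permMat n (RatFunc ℚ) σ) ≠ 0) ∧
    (n.factorial : RatFunc ℚ) *
        ∑ i ∈ Finset.range (m + 1), (a i : RatFunc ℚ) * RatFunc.X ^ i =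
      ∑ σ : Equiv.Perm (Fin n),
        Matrix.det (1 - ((RatFunc.X : RatFunc ℚ) ^ 2) • permMat n (RatFunc ℚ) σ) /
          Matrix.det (1 - (RatFunc.X : RatFunc ℚ) • permMat n (RatFunc ℚ) σ) := by
  have hden (σ : Perm (Fin n)) :
      det (1 - (RatFunc.X : RatFunc ℚ) • permMat n (RatFunc ℚ) σ) ≠ 0 := by
    rw [det_one_sub_smul_permMat]
    simpa using det_one_sub_X_smul_ne_zero ((edgePerm σ).permMatrix ℚ)
  refine ⟨hden, ?_⟩
  have hσ (σ : Perm (Fin n)) :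
      ∑ i ∈ range (m + 1),
          (Fintype.card (fixedBy (Set.powersetCard (Edges n) i) σ) : RatFunc ℚ) * RatFunc.X ^ i =
        det (1 - (RatFunc.X : RatFunc ℚ) ^ 2 • permMat n (RatFunc ℚ) σ) /
          det (1 - (RatFunc.X : RatFunc ℚ) • permMat n (RatFunc ℚ) σ) := by
    rw [hm, sum_card_fixedBy_powersetCard_mul_pow, ← invariantSubsetSum_edgePerm,
      eq_div_iff (hden σ), det_one_sub_smul_permMat, det_one_sub_smul_permMat,
      Perm.det_one_sub_sq_smul_permMatrix, mul_comm]
  calc _ = ∑ i ∈ range (m + 1), ∑ σ : Perm (Fin n),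
          (Fintype.card (fixedBy (Set.powersetCard (Edges n) i) σ) : RatFunc ℚ) *
            RatFunc.X ^ i := by
        rw [mul_sum]
        refine sum_congr rfl fun i _ => ?_
        rw [← sum_mul, ← mul_assoc, ha]
        congr 1
        exact_mod_cast (mul_comm _ _).trans (card_quotient_graphIsoSetoid_mul_factorial n i)
    _ = _ := by
        rw [sum_comm]
        exact sum_congr rfl fun σ _ => hσ σ
end

section
/- Let X be a finite type with Fintype.card X = m and let σ : Equiv.Perm X. For k ≥ 1 let j_k(σ) be the number of cycles of length k in the disjoint cycle decomposition of σ (for k ≥ 2 this is the multiplicity of k in σ.cycleType; j_1(σ) = m - σ.support.card is the number of fixed points). Then for every i, the number of i-element subsets s of X with σ '' s = s (i.e. s.image σ = s for s : Finset X with s.card = i) equals ∑ over all functions β : ℕ → ℕ supported on {1,…,m} with ∑_{k=1}^{m} k * β k = i of ∏_{k=1}^{m} Nat.choose (j_k(σ)) (β k). -/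
/-!
A finset `s` satisfies `s.image σ = s` exactly when it is a union of cycles of `σ`, fixed points
counting as cycles of length `1`; so invariant `i`-sets correspond to sets of cycles of total
length `i`. Sorting such a set of cycles by the number `β k` of its cycles of each length `k`, the
sets with profile `β` arise by choosing `β k` of the `j k` cycles of length `k` independently for
each `k`, which gives `∏ k, C(j k, β k)` of them.
-/

open Finset

namespace Finset

variable {ι κ : Type*} [DecidableEq ι] [DecidableEq κ]

theorem card_powerset_filter_card_fibers_eq_prod_choose {A : Finset ι} {K : Finset κ}
    {w : ι → κ} (hw : ∀ a ∈ A, w a ∈ K) (β : κ → ℕ) :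
    #{T ∈ A.powerset | ∀ k ∈ K, #{a ∈ T | w a = k} = β k} =
      ∏ k ∈ K, (#{a ∈ A | w a = k}).choose (β k) := by
  simp_rw [← card_powersetCard, ← card_pi]
  refine card_bij (fun T _ k _ => {a ∈ T | w a = k}) ?_ ?_ ?_
  · intro T hT
    simp only [mem_filter, mem_powerset] at hT
    simp only [mem_pi, mem_powersetCard]
    exact fun k hk => ⟨filter_subset_filter _ hT.1, hT.2 k hk⟩
  · intro T₁ h₁ T₂ h₂ heq
    simp only [mem_filter, mem_powerset] at h₁ h₂
    ext a
    by_cases ha : w a ∈ K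
    · simpa using congrArg (a ∈ ·) (congrFun₂ heq (w a) ha)
    · have hA : a ∉ A := fun h => ha (hw a h)
      exact iff_of_false (fun h => hA (h₁.1 h)) (fun h => hA (h₂.1 h))
  · intro f hf
    simp only [mem_pi, mem_powersetCard, subset_iff, mem_filter] at hf
    have hfiber : ∀ k hk, {a ∈ K.attach.biUnion fun k => f k.1 k.2 | w a = k} = f k hk := by
      intro k hk
      ext a
      simp only [mem_filter, mem_biUnion, mem_attach, true_and, Subtype.exists]
      constructor
      · rintro ⟨⟨k', hk', ha⟩, rfl⟩
        obtain rfl := ((hf k' hk').1 ha).2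
        exact ha
      · intro ha
        exact ⟨⟨k, hk, ha⟩, ((hf k hk).1 ha).2⟩
    refine ⟨K.attach.biUnion fun k => f k.1 k.2, ?_, funext₂ fun k hk => hfiber k hk⟩
    simp only [mem_filter, mem_powerset, biUnion_subset, mem_attach, forall_const, Subtype.forall]
    exact ⟨fun k hk a ha => ((hf k hk).1 ha).1, fun k hk => hfiber k hk ▸ (hf k hk).2⟩

theorem finsum_mem_card_fiber_eq_card_filter {α β : Type*} [DecidableEq β] (s : Finset α) (f : α → β)
    (S : Set β) [DecidablePred (· ∈ S)] :
    ∑ᶠ b ∈ S, #{a ∈ s | f a = b} = #{a ∈ s | f a ∈ S} := by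
  set t := {b ∈ s.image f | b ∈ S}
  have hsupp : S ∩ Function.support (fun b => #{a ∈ s | f a = b}) ⊆ t := by
    rintro b ⟨hbS, hb⟩
    obtain ⟨a, ha, rfl⟩ := filter_nonempty_iff.1 (card_ne_zero.1 hb)
    exact mem_filter.2 ⟨mem_image_of_mem f ha, hbS⟩
  have hmaps : ∀ a ∈ {a ∈ s | f a ∈ S}, f a ∈ t := fun a ha =>
    mem_filter.2 ⟨mem_image_of_mem f (mem_filter.1 ha).1, (mem_filter.1 ha).2⟩
  rw [finsum_mem_eq_sum_of_subset _ hsupp fun b hb => (mem_filter.1 hb).2,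
    card_eq_sum_card_fiberwise hmaps]
  refine sum_congr rfl fun b hb => ?_
  rw [filter_filter]
  refine congrArg card (filter_congr fun a _ => ?_)
  exact ⟨fun h => ⟨h ▸ (mem_filter.1 hb).2, h⟩, And.right⟩

theorem card_powerset_filter_sum_eq_finsum_prod_choose {A : Finset ι} {K : Finset ℕ}
    {w : ι → ℕ} (hw : ∀ a ∈ A, w a ∈ K) (i : ℕ) :
    #{T ∈ A.powerset | ∑ a ∈ T, w a = i} =
      ∑ᶠ β ∈ {β : ℕ → ℕ | (∀ k, β k ≠ 0 → k ∈ K) ∧ ∑ k ∈ K, k * β k = i},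
        ∏ k ∈ K, (#{a ∈ A | w a = k}).choose (β k) := by
  classical
  set S := {β : ℕ → ℕ | (∀ k, β k ≠ 0 → k ∈ K) ∧ ∑ k ∈ K, k * β k = i}
  let profile : Finset ι → ℕ → ℕ := fun T k => #{a ∈ T | w a = k}
  have hsupp : ∀ T ∈ A.powerset, ∀ k, profile T k ≠ 0 → k ∈ K := by
    intro T hT k hk
    obtain ⟨a, ha, rfl⟩ := filter_nonempty_iff.1 (card_ne_zero.1 hk)
    exact hw a (mem_powerset.1 hT ha)
  have hweight : ∀ T ∈ A.powerset, ∑ k ∈ K, k * profile T k = ∑ a ∈ T, w a := by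
    intro T hT
    rw [← sum_fiberwise_of_maps_to fun a ha => hw a (mem_powerset.1 hT ha)]
    refine sum_congr rfl fun k _ => ?_
    rw [sum_congr rfl fun a ha => (mem_filter.1 ha).2, sum_const, smul_eq_mul, mul_comm]
  calc #{T ∈ A.powerset | ∑ a ∈ T, w a = i}
      = #{T ∈ A.powerset | profile T ∈ S} :=
        congrArg card <| filter_congr fun T hT => by
          simp only [S, Set.mem_ofPred_eq, hweight T hT]
          exact ⟨fun h => ⟨hsupp T hT, h⟩, And.right⟩
    _ = ∑ᶠ β ∈ S, #{T ∈ A.powerset | profile T = β} := by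
      convert (finsum_mem_card_fiber_eq_card_filter A.powerset profile S).symm
    _ = _ := finsum_mem_congr rfl fun β hβ => by
      rw [← card_powerset_filter_card_fibers_eq_prod_choose hw]
      refine congrArg card (filter_congr fun T hT => ⟨fun h k _ => congrFun h k, fun h => ?_⟩)
      funext k
      by_cases hk : k ∈ K
      · exact h k hk
      · rw [of_not_not (mt (hsupp T hT k) hk), of_not_not (mt (hβ.1 k) hk)]

end Finset

namespace Finpartition

variable {α : Type*} [Fintype α] [DecidableEq α] (P : Finpartition (univ : Finset α))

theorem filter_parts_subset_biUnion {T : Finset (Finset α)} (hT : T ⊆ P.parts) :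
    {t ∈ P.parts | t ⊆ T.biUnion id} = T := by
  ext t
  simp only [mem_filter]
  refine ⟨fun ⟨ht, hsub⟩ => ?_, fun ht => ⟨hT ht, subset_biUnion_of_mem id ht⟩⟩
  obtain ⟨x, hx⟩ := P.nonempty_of_mem_parts ht
  obtain ⟨u, hu, hxu⟩ := mem_biUnion.1 (hsub hx)
  rwa [P.eq_of_mem_parts ht (hT hu) hx hxu]

theorem biUnion_filter_parts_subset {s : Finset α} (hs : ∀ x ∈ s, P.part x ⊆ s) :
    {t ∈ P.parts | t ⊆ s}.biUnion id = s := by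
  ext x
  simp only [mem_biUnion, mem_filter, id]
  refine ⟨fun ⟨t, ⟨_, hts⟩, hxt⟩ => hts hxt, fun hx => ⟨P.part x, ⟨?_, hs x hx⟩, ?_⟩⟩
  · exact P.part_mem.2 (mem_univ x)
  · exact P.mem_part_self.2 (mem_univ x)

theorem part_subset_biUnion {T : Finset (Finset α)} (hT : T ⊆ P.parts) {x : α}
    (hx : x ∈ T.biUnion id) : P.part x ⊆ T.biUnion id := by
  obtain ⟨t, ht, hxt⟩ := mem_biUnion.1 hx
  rw [P.part_eq_of_mem (hT ht) hxt]
  exact subset_biUnion_of_mem id ht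

theorem card_biUnion_of_subset_parts {T : Finset (Finset α)} (hT : T ⊆ P.parts) :
    #(T.biUnion id) = ∑ t ∈ T, #t :=
  card_biUnion fun _ ht _ hu => P.disjoint (hT ht) (hT hu)

theorem card_filter_forall_part_subset_eq (i : ℕ) :
    #{s : Finset α | #s = i ∧ ∀ x ∈ s, P.part x ⊆ s} =
      #{T ∈ P.parts.powerset | ∑ t ∈ T, #t = i} := by
  refine card_bij' (fun s _ => {t ∈ P.parts | t ⊆ s}) (fun T _ => T.biUnion id) ?_ ?_ ?_ ?_
  · intro s hs
    simp only [mem_filter, mem_univ, true_and, mem_powerset] at hs ⊢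
    refine ⟨filter_subset _ _, ?_⟩
    rw [← P.card_biUnion_of_subset_parts (filter_subset _ _), P.biUnion_filter_parts_subset hs.2,
      hs.1]
  · intro T hT
    simp only [mem_filter, mem_univ, true_and, mem_powerset] at hT ⊢
    exact ⟨(P.card_biUnion_of_subset_parts hT.1).trans hT.2,
      fun x hx => P.part_subset_biUnion hT.1 hx⟩
  · intro s hs
    exact P.biUnion_filter_parts_subset (mem_filter.1 hs).2.2
  · intro T hT
    exact P.filter_parts_subset_biUnion (mem_powerset.1 (mem_filter.1 hT).1)

end Finpartition

namespace Equiv.Perm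

variable {α : Type*} [Fintype α] [DecidableEq α]

theorem count_one_parts_partition (σ : Perm α) :
    σ.partition.parts.count 1 = Fintype.card α - #σ.support := by
  rw [parts_partition, Multiset.count_add, Multiset.count_replicate_self,
    Multiset.count_eq_zero.2 fun h => (one_lt_of_mem_cycleType h).false, zero_add]

theorem count_parts_partition_of_two_le (σ : Perm α) {k : ℕ} (hk : 2 ≤ k) :
    σ.partition.parts.count k = σ.cycleType.count k := by
  rw [parts_partition, Multiset.count_add, Multiset.count_replicate, if_neg (by omega), add_zero]

def cycleFinpartition (σ : Perm α) : Finpartition (univ : Finset α) :=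
  letI : DecidableRel (SameCycle.setoid σ) := inferInstanceAs (DecidableRel σ.SameCycle)
  Finpartition.ofSetoid (SameCycle.setoid σ)

variable {σ : Perm α}

theorem mem_part_cycleFinpartition_iff {x y : α} :
    y ∈ σ.cycleFinpartition.part x ↔ σ.SameCycle x y :=
  letI : DecidableRel (SameCycle.setoid σ) := inferInstanceAs (DecidableRel σ.SameCycle)
  Finpartition.mem_part_ofSetoid_iff_rel

theorem image_eq_self_iff_forall_part_subset {s : Finset α} :
    s.image σ = s ↔ ∀ x ∈ s, σ.cycleFinpartition.part x ⊆ s := by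
  constructor
  · intro hs x hx y hy
    obtain ⟨n, -, -, rfl⟩ := (mem_part_cycleFinpartition_iff.1 hy).exists_pow_eq σ
    have hmaps : Set.MapsTo σ s s := fun z hz => hs ▸ mem_image_of_mem σ hz
    exact hmaps.perm_pow n hx
  · intro hs
    refine eq_of_subset_of_card_le (image_subset_iff.2 fun x hx => hs x hx ?_)
      (card_image_of_injective s σ.injective).ge
    exact mem_part_cycleFinpartition_iff.2 (SameCycle.refl σ x |>.trans ⟨1, by simp⟩)

theorem part_cycleFinpartition_of_mem_support {x : α} (hx : x ∈ σ.support) :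
    σ.cycleFinpartition.part x = (σ.cycleOf x).support := by
  ext y
  rw [mem_part_cycleFinpartition_iff, mem_support_cycleOf_iff' (mem_support.1 hx)]

theorem part_cycleFinpartition_of_notMem_support {x : α} (hx : x ∉ σ.support) :
    σ.cycleFinpartition.part x = {x} := by
  ext y
  rw [mem_part_cycleFinpartition_iff, mem_singleton]
  exact ⟨fun h => (h.eq_of_left (notMem_support.1 hx)).symm, fun h => h ▸ SameCycle.refl σ x⟩

theorem filter_parts_cycleFinpartition_two_le_card :
    {t ∈ σ.cycleFinpartition.parts | 2 ≤ #t} = σ.cycleFactorsFinset.image support := by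
  ext t
  simp only [mem_filter, mem_image]
  constructor
  · rintro ⟨ht, h2⟩
    obtain ⟨x, -, rfl⟩ := σ.cycleFinpartition.part_surjOn ht
    by_cases hx : x ∈ σ.support
    · exact ⟨σ.cycleOf x, cycleOf_mem_cycleFactorsFinset_iff.2 hx,
        (part_cycleFinpartition_of_mem_support hx).symm⟩
    · rw [part_cycleFinpartition_of_notMem_support hx, card_singleton] at h2
      omega
  · rintro ⟨c, hc, rfl⟩
    obtain ⟨a, ha⟩ := (mem_cycleFactorsFinset_iff.1 hc).1.nonempty_support
    obtain rfl := cycle_is_cycleOf ha hc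
    have haσ := cycleOf_mem_cycleFactorsFinset_iff.1 hc
    rw [← part_cycleFinpartition_of_mem_support haσ]
    refine ⟨σ.cycleFinpartition.part_mem.2 (mem_univ a), ?_⟩
    rw [part_cycleFinpartition_of_mem_support haσ]
    exact two_le_card_support_cycleOf_iff.2 (mem_support.1 haσ)

theorem filter_two_le_map_card_parts_cycleFinpartition :
    (σ.cycleFinpartition.parts.val.map card).filter (2 ≤ ·) = σ.cycleType := by
  have hinj : Set.InjOn support (σ.cycleFactorsFinset : Set (Perm α)) := by
    intro c hc d hd hcd
    obtain ⟨a, ha⟩ := (mem_cycleFactorsFinset_iff.1 hc).1.nonempty_support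
    rw [cycle_is_cycleOf ha hc, cycle_is_cycleOf (hcd ▸ ha) hd]
  calc (σ.cycleFinpartition.parts.val.map card).filter (2 ≤ ·)
      = {t ∈ σ.cycleFinpartition.parts | 2 ≤ #t}.val.map card := by
        rw [Multiset.filter_map]; rfl
    _ = σ.cycleType := by
        rw [filter_parts_cycleFinpartition_two_le_card, image_val_of_injOn hinj,
          Multiset.map_map, cycleType_def]

theorem map_card_parts_cycleFinpartition :
    σ.cycleFinpartition.parts.val.map card = σ.partition.parts := by
  set M := σ.cycleFinpartition.parts.val.map card
  have hshort : M.filter (¬ 2 ≤ ·) = Multiset.replicate (M.filter (¬ 2 ≤ ·)).card 1 := by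
    refine Multiset.eq_replicate_card.2 fun b hb => ?_
    obtain ⟨hbM, hb2⟩ := Multiset.mem_filter.1 hb
    obtain ⟨t, ht, rfl⟩ := Multiset.mem_map.1 hbM
    have := (σ.cycleFinpartition.nonempty_of_mem_parts ht).card_pos
    omega
  have hsum : M.sum = Fintype.card α := σ.cycleFinpartition.sum_card_parts
  rw [← Multiset.filter_add_not (2 ≤ ·) M, filter_two_le_map_card_parts_cycleFinpartition,
    hshort] at hsum ⊢
  rw [parts_partition]
  congr 2
  rw [Multiset.sum_add, sum_cycleType, Multiset.sum_replicate, smul_eq_mul, mul_one] at hsum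
  omega

theorem card_filter_parts_cycleFinpartition_eq_count (k : ℕ) :
    #{t ∈ σ.cycleFinpartition.parts | #t = k} = σ.partition.parts.count k := by
  rw [← map_card_parts_cycleFinpartition, Multiset.count_map, card_def, filter_val]
  congr 1
  exact Multiset.filter_congr fun t _ => eq_comm

end Equiv.Perm

/-- first Lemma in the proof of Theorem 3.  For a permutation `σ` of an
`m`-element set `X`, with `j k` the number of `k`-cycles of `σ` (fixed points counting as
`1`-cycles), the number of `i`-element subsets `s` of `X` with `s.image σ = s` equals
`∑_{β₁+2β₂+⋯+mβ_m = i} C(j₁,β₁) C(j₂,β₂) ⋯ C(j_m,β_m)`, the sum being over all functions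
`β : ℕ → ℕ` supported on `{1,…,m}`. -/
theorem stmt_5 (X : Type*) [Fintype X] [DecidableEq X] (m : ℕ) (hm : Fintype.card X = m)
    (σ : Equiv.Perm X) (j : ℕ → ℕ)
    (hj1 : j 1 = m - σ.support.card)
    (hjk : ∀ k, 2 ≤ k → j k = Multiset.count k σ.cycleType) (i : ℕ) :
    (Finset.univ.filter fun s : Finset X => s.card = i ∧ s.image σ = s).card =
      ∑ᶠ β ∈ {β : ℕ → ℕ | (∀ k, β k ≠ 0 → 1 ≤ k ∧ k ≤ m) ∧
          ∑ k ∈ Finset.Icc 1 m, k * β k = i},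
        ∏ k ∈ Finset.Icc 1 m, Nat.choose (j k) (β k) := by
  subst hm
  have hcard : ∀ t ∈ σ.cycleFinpartition.parts, #t ∈ Icc 1 (Fintype.card X) := fun t ht =>
    mem_Icc.2 ⟨(σ.cycleFinpartition.nonempty_of_mem_parts ht).card_pos, card_le_univ t⟩
  have hj : ∀ k ∈ Icc 1 (Fintype.card X), j k = #{t ∈ σ.cycleFinpartition.parts | #t = k} := by
    intro k hk
    rw [Equiv.Perm.card_filter_parts_cycleFinpartition_eq_count]
    rcases (mem_Icc.1 hk).1.eq_or_lt with rfl | hk2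
    · rw [σ.count_one_parts_partition, hj1]
    · rw [σ.count_parts_partition_of_two_le hk2, hjk k hk2]
  calc _ = #{s : Finset X | #s = i ∧ ∀ x ∈ s, σ.cycleFinpartition.part x ⊆ s} := by
        simp_rw [Equiv.Perm.image_eq_self_iff_forall_part_subset]
    _ = #{T ∈ σ.cycleFinpartition.parts.powerset | ∑ t ∈ T, #t = i} :=
        σ.cycleFinpartition.card_filter_forall_part_subset_eq i
    _ = _ := card_powerset_filter_sum_eq_finsum_prod_choose hcard i
    _ = _ := finsum_mem_congr (by simp_rw [mem_Icc]) fun β _ =>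
        prod_congr rfl fun k hk => by rw [hj k hk]
end

section
/- Let X be a finite type with Fintype.card X = m, let σ : Equiv.Perm X, and let P : Matrix X X ℤ be the permutation matrix of σ (P x y = 1 if σ y = x, else 0). For k ≥ 1 let j_k(σ) be the number of k-cycles of σ (with j_1(σ) the number of fixed points). Then in Polynomial ℤ: det((1 : Matrix X X (Polynomial ℤ)) - X • P.map C) = ∏_{k=1}^{m} (1 - X^k)^{j_k(σ)}, where C : ℤ → Polynomial ℤ is the constant-coefficient embedding. -/
/-!
For a single cycle `c`, only the identity and `c⁻¹` contribute to the Leibniz expansion of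
`det (1 - X • P_c)`, which gives `(1 - X) ^ (#fixed points) * (1 - X ^ #c.support)`.
For disjoint `σ` and `τ` the permutation matrices satisfy `P_σ + P_τ = 1 + P_σ P_τ`, hence
`(1 - X P_σ) (1 - X P_τ) = (1 - X) (1 - X P_σ P_τ)`. Taking determinants and cancelling the
non-zero-divisor `(1 - X) ^ card` makes the formula multiplicative along a disjoint cycle
decomposition.
-/

open Polynomial Equiv Equiv.Perm Matrix Finset

theorem Finset.prod_eq_pow_mul_pow_of_forall_mem {ι M : Type*} [Fintype ι] [DecidableEq ι]
    [CommMonoid M] (s : Finset ι) {f : ι → M} {a b : M} (ha : ∀ i ∈ s, f i = a)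
    (hb : ∀ i ∉ s, f i = b) : ∏ i, f i = a ^ #s * b ^ (Fintype.card ι - #s) := by
  rw [← prod_mul_prod_compl s, prod_congr rfl ha,
    prod_congr rfl fun i hi => hb i (mem_compl.1 hi), prod_const, prod_const, card_compl]

theorem Polynomial.isRegular_one_sub_X {R : Type*} [CommRing R] : IsRegular (1 - X : R[X]) := by
  simpa using (isUnit_one.neg.isRegular).mul (monic_X_sub_C (1 : R)).isRegular

namespace Equiv.Perm

variable {α : Type*}

theorem IsCycle.eq_one_or_eq_of_forall_eq_or_eq [Finite α] {c π : Perm α} (hc : c.IsCycle)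
    (h : ∀ i, π i = i ∨ π i = c i) : π = 1 ∨ π = c := by
  -- `{i | π i = c i}` is `c`-invariant, and `c` acts transitively on its support.
  have hstep : ∀ i, π i = c i → π (c i) = c (c i) := by
    intro i hi
    refine (h (c i)).elim (fun hfix => ?_) id
    have hci : c i = i := π.injective (hfix.trans hi.symm)
    rw [hfix, hci, hci]
  have horbit : ∀ i, π i = c i → ∀ k : ℕ, π ((c ^ k) i) = c ((c ^ k) i) := by
    intro i hi k
    induction k with
    | zero => simpa using hi
    | succ k ih => rw [pow_succ', mul_apply]; exact hstep _ ih
  by_cases hmoved : ∃ i, c i ≠ i ∧ π i = c i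
  · obtain ⟨i, hci, hi⟩ := hmoved
    refine .inr (ext fun x => ?_)
    by_cases hx : c x = x
    · rcases h x with hπ | hπ <;> rw [hπ, hx]
    · obtain ⟨k, rfl⟩ := hc.exists_pow_eq hci hx
      exact horbit i hi k
  · push Not at hmoved
    refine .inl (ext fun x => (h x).elim id fun hπ => ?_)
    by_cases hx : c x = x
    · rw [hπ, hx, one_apply]
    · exact absurd hπ (hmoved x hx)

theorem prod_map_cycleType_eq_prod_Icc {M : Type*} [Fintype α] [DecidableEq α]
    [CommMonoid M] (σ : Perm α) (f : ℕ → M) :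
    (σ.cycleType.map f).prod = ∏ k ∈ Icc 2 (Fintype.card α), f k ^ σ.cycleType.count k := by
  rw [prod_multiset_map_count]
  refine prod_subset (fun k hk => ?_) fun k _ hk => by
    rw [Multiset.count_eq_zero_of_notMem (mt Multiset.mem_toFinset.2 hk), pow_zero]
  rw [Multiset.mem_toFinset] at hk
  exact mem_Icc.2 ⟨two_le_of_mem_cycleType hk,
    (le_card_support_of_mem_cycleType hk).trans (card_le_univ _)⟩

end Equiv.Perm

namespace Matrix

variable {n R : Type*} [DecidableEq n]

theorem permMatrix_add_permMatrix_of_disjoint [AddCommMonoidWithOne R] {σ τ : Perm n}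
    (h : σ.Disjoint τ) : σ.permMatrix R + τ.permMatrix R = 1 + (σ * τ).permMatrix R := by
  ext i j
  simp only [add_apply, one_apply, PEquiv.toMatrix_apply, toPEquiv_apply, Option.mem_def,
    Option.some.injEq]
  rcases h i with hσ | hτ
  · by_cases hτ : τ i = i
    · simp [hσ, hτ]
    · have hστ : σ (τ i) = τ i := (h (τ i)).resolve_right fun h' => hτ (τ.injective h')
      simp [hσ, hστ]
  · simp only [hτ, coe_mul, Function.comp_apply]
    exact add_comm _ _

variable [Fintype n] [CommRing R]

theorem charpolyRev_mul_charpolyRev_of_add_eq {A B : Matrix n n R} (h : A + B = 1 + A * B) :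
    A.charpolyRev * B.charpolyRev = (1 - X) ^ Fintype.card n * (A * B).charpolyRev := by
  have hC : A.map C + B.map C = 1 + A.map C * B.map C := by
    simpa only [map_add, map_one, map_mul, RingHom.mapMatrix_apply] using
      congrArg (C : R →+* R[X]).mapMatrix h
  rw [charpolyRev, charpolyRev, charpolyRev, ← det_mul, ← det_smul, Matrix.map_mul]
  congr 1
  simp only [sub_mul, mul_sub, one_mul, mul_one, smul_mul_assoc, mul_smul_comm, smul_smul,
    smul_sub, sub_smul, one_smul]
  linear_combination (norm := module) (-X : R[X]) • hC

theorem charpolyRev_permMatrix_of_isCycle {c : Perm n} (hc : c.IsCycle) :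
    (c.permMatrix R).charpolyRev =
      (1 - X) ^ (Fintype.card n - #c.support) * (1 - X ^ #c.support) := by
  set N := 1 - (X : R[X]) • (c.permMatrix R).map C
  have hN : ∀ i j, N i j = (if i = j then 1 else 0) - if c i = j then X else 0 := by
    intro i j
    simp [N, one_apply, PEquiv.toMatrix_apply]
  have hvanish : ∀ π ∉ ({1, c⁻¹} : Finset (Perm n)), ∏ i, N (π i) i = 0 := by
    intro π hπ
    obtain ⟨i, hfix, hinv⟩ : ∃ i, π i ≠ i ∧ π i ≠ c⁻¹ i := by
      by_contra! h
      have := hc.inv.eq_one_or_eq_of_forall_eq_or_eq fun i => or_iff_not_imp_left.2 (h i)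
      simp_all
    refine prod_eq_zero (mem_univ i) ?_
    rw [hN, if_neg hfix, if_neg (fun h => hinv (eq_inv_iff_eq.2 h)), sub_zero]
  have hone :
      ∏ i, N ((1 : Perm n) i) i = 1 ^ #c.support * (1 - X) ^ (Fintype.card n - #c.support) :=
    prod_eq_pow_mul_pow_of_forall_mem _ (fun i hi => by simp [hN, mem_support.1 hi])
      (fun i hi => by simp [hN, notMem_support.1 hi])
  have hinv : ∏ i, N (c⁻¹ i) i = (-X) ^ #c.support * (1 - X) ^ (Fintype.card n - #c.support) :=
    prod_eq_pow_mul_pow_of_forall_mem _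
      (fun i hi => by simp [hN, symm_apply_eq, Ne.symm (mem_support.1 hi)])
      (fun i hi => by simp [hN, symm_apply_eq, notMem_support.1 hi])
  rw [charpolyRev, det_apply',
    ← sum_subset (subset_univ _) fun π _ hπ => by rw [hvanish π hπ, mul_zero],
    sum_pair hc.inv.ne_one.symm, hone, hinv, sign_inv, hc.sign, Perm.sign_one, neg_pow (X : R[X])]
  have hsq : ((-1 : R[X]) ^ #c.support) * (-1) ^ #c.support = 1 := by rw [← mul_pow]; norm_num
  push_cast
  linear_combination (-X ^ #c.support * (1 - X) ^ (Fintype.card n - #c.support)) * hsq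

theorem charpolyRev_permMatrix (σ : Perm n) :
    (σ.permMatrix R).charpolyRev =
      (1 - X) ^ (Fintype.card n - #σ.support) * (σ.cycleType.map (1 - X ^ ·)).prod := by
  induction σ using cycle_induction_on with
  | base_one =>
    have hscalar : (1 : Matrix n n R[X]) - (X : R[X]) • 1 = (1 - X : R[X]) • 1 := by
      rw [sub_smul, one_smul]
    simp [charpolyRev, hscalar]
  | base_cycles c hc => simp [charpolyRev_permMatrix_of_isCycle hc, hc.cycleType]
  | induction_disjoint σ τ hd _ hσ hτ =>
    have hcard : #σ.support + #τ.support ≤ Fintype.card n := by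
      rw [← hd.card_support_mul]; exact card_le_univ _
    have hadd := permMatrix_add_permMatrix_of_disjoint (R := R) hd
    rw [add_comm, permMatrix_mul] at hadd
    apply (isRegular_one_sub_X.pow (Fintype.card n)).left
    dsimp only
    rw [permMatrix_mul, ← charpolyRev_mul_charpolyRev_of_add_eq hadd, hσ, hτ,
      hd.cycleType_mul, hd.card_support_mul, Multiset.map_add, Multiset.prod_add]
    have hexp : Fintype.card n - #τ.support + (Fintype.card n - #σ.support) =
        Fintype.card n + (Fintype.card n - (#σ.support + #τ.support)) := by omega
    rw [mul_mul_mul_comm, ← pow_add, hexp, pow_add]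
    ring

end Matrix

/-- factorization of the reverse characteristic polynomial of a permutation
matrix, used in the third Lemma of the paper.  For a permutation `σ` of an `m`-element set
`X` with permutation matrix `P` (`P x y = 1` if `σ y = x`, else `0`) and `j k` the number of
`k`-cycles of `σ` (fixed points counting as `1`-cycles), in `Polynomial ℤ` we have
`det(1 - X • P) = ∏_{k=1}^{m} (1 - X^k)^{j_k}`. -/
theorem stmt_7 (X : Type*) [Fintype X] [DecidableEq X] (m : ℕ) (hm : Fintype.card X = m)
    (σ : Equiv.Perm X) (P : Matrix X X ℤ)
    (hP : ∀ x y, P x y = if σ y = x then 1 else 0)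
    (j : ℕ → ℕ)
    (hj1 : j 1 = m - σ.support.card)
    (hjk : ∀ k, 2 ≤ k → j k = Multiset.count k σ.cycleType) :
    Matrix.det ((1 : Matrix X X (Polynomial ℤ)) -
        (Polynomial.X : Polynomial ℤ) • P.map Polynomial.C) =
      ∏ k ∈ Finset.Icc 1 m, (1 - (Polynomial.X : Polynomial ℤ) ^ k) ^ j k := by
  subst hm
  have hPσ : P = σ⁻¹.permMatrix ℤ := by
    ext x y
    simp only [hP, PEquiv.toMatrix_apply, toPEquiv_apply, Option.mem_def, Option.some_inj,
      inv_eq_iff_eq, eq_comm (a := x)]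
  have hsplit : ∏ k ∈ Icc 1 (Fintype.card X), (1 - (Polynomial.X : ℤ[X]) ^ k) ^ j k =
      (1 - Polynomial.X) ^ j 1 *
        ∏ k ∈ Icc 2 (Fintype.card X), (1 - Polynomial.X ^ k) ^ j k := by
    rcases (Fintype.card X).eq_zero_or_pos with hempty | hpos
    · simp [hempty, hj1]
    · rw [← insert_Icc_add_one_left_eq_Icc hpos, prod_insert (by simp), pow_one]
      rfl
  change P.charpolyRev = _
  rw [hsplit, prod_congr rfl fun k hk => by rw [hjk k (mem_Icc.1 hk).1], hj1, hPσ,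
    charpolyRev_permMatrix, support_inv, cycleType_inv, prod_map_cycleType_eq_prod_Icc]
end

section
/- Let X be a finite type with Fintype.card X = m, let σ : Equiv.Perm X, and let P : Matrix X X ℤ be the permutation matrix of σ. For each i, let N_i(σ) be the number of i-element subsets s of X with s.image σ = s. Then in Polynomial ℤ: (∑_{i=0}^{m} (N_i(σ) : ℤ) • X^i) * det((1 : Matrix X X (Polynomial ℤ)) - X • P.map C) = det((1 : Matrix X X (Polynomial ℤ)) - X^2 • P.map C). -/
/-!
Both sides factor over the cycles of `σ`, fixed points counting as cycles of length `1`.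
An invariant subset is a union of cycles, so the generating polynomial of invariant subsets is
`∏ (1 + X ^ ℓ)` over the cycle lengths `ℓ`, while `det (1 - t • P) = ∏ (1 - t ^ ℓ)`; the identity
is then `(1 + X ^ ℓ) * (1 - X ^ ℓ) = 1 - (X ^ 2) ^ ℓ`. For a single cycle only the identity and
the cycle itself contribute to the Leibniz expansion of the determinant.
-/

open Finset Matrix

namespace Equiv.Perm

variable {α R : Type*} [DecidableEq α]

theorem image_eq_self_iff_mapsTo {σ : Perm α} {s : Finset α} :
    s.image σ = s ↔ Set.MapsTo σ s s := by
  rw [mapsTo_iff_image_subset]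
  exact ⟨fun h => h.subset,
    fun h => eq_of_subset_of_card_le h (card_image_of_injective _ σ.injective).ge⟩

theorem IsCycle.support_subset_of_mapsTo [Fintype α] {c : Perm α} (hc : c.IsCycle)
    {s : Finset α} (hs : Set.MapsTo c s s) {y : α} (hys : y ∈ s) (hyc : y ∈ c.support) :
    c.support ⊆ s := by
  intro z hz
  obtain ⟨n, rfl⟩ := hc.exists_pow_eq (mem_support.1 hyc) (mem_support.1 hz)
  rw [coe_pow]
  exact hs.iterate n hys

section InvariantSubsets

variable [CommSemiring R]

def invariantSubsetGF (σ : Perm α) (u : Finset α) (x : R) : R :=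
  ∑ s ∈ u.powerset with s.image σ = s, x ^ #s

theorem invariantSubsetGF_congr {σ τ : Perm α} {u : Finset α} (h : ∀ y ∈ u, σ y = τ y)
    (x : R) : σ.invariantSubsetGF u x = τ.invariantSubsetGF u x := by
  refine sum_congr (filter_congr fun s hs => ?_) fun _ _ => rfl
  rw [image_congr fun y hy => h y (mem_powerset.1 hs hy)]

theorem invariantSubsetGF_of_forall_apply_eq {σ : Perm α} {u : Finset α}
    (h : ∀ y ∈ u, σ y = y) (x : R) : σ.invariantSubsetGF u x = (1 + x) ^ #u := by
  rw [invariantSubsetGF_congr (τ := 1) h, invariantSubsetGF, ← prod_const, prod_one_add]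
  simp

theorem invariantSubsetGF_union {σ : Perm α} {u v : Finset α} (huv : _root_.Disjoint u v)
    (hu : Set.MapsTo σ u u) (hv : Set.MapsTo σ v v) (x : R) :
    σ.invariantSubsetGF (u ∪ v) x = σ.invariantSubsetGF u x * σ.invariantSubsetGF v x := by
  simp only [invariantSubsetGF, sum_mul_sum, ← sum_product', ← pow_add, image_eq_self_iff_mapsTo]
  refine sum_nbij' (fun s => (s ∩ u, s ∩ v)) (fun p => p.1 ∪ p.2) ?_ ?_ ?_ ?_ ?_
  · intro s hs
    simp only [mem_filter, mem_powerset, mem_product, coe_inter] at hs ⊢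
    exact ⟨⟨inter_subset_right, hs.2.inter_inter hu⟩, inter_subset_right, hs.2.inter_inter hv⟩
  · intro p hp
    simp only [mem_filter, mem_powerset, mem_product, coe_union] at hp ⊢
    exact ⟨union_subset_union hp.1.1 hp.2.1, hp.1.2.union_union hp.2.2⟩
  · intro s hs
    simp only [mem_filter, mem_powerset] at hs
    simp [← inter_union_distrib_left, inter_eq_left.2 hs.1]
  · intro p hp
    simp only [mem_filter, mem_powerset, mem_product] at hp
    rw [union_inter_distrib_right, union_inter_distrib_right, inter_eq_left.2 hp.1.1,
      inter_eq_left.2 hp.2.1, disjoint_iff_inter_eq_empty.1 (huv.mono_left hp.1.1),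
      disjoint_iff_inter_eq_empty.1 (huv.symm.mono_left hp.2.1), union_empty, empty_union]
  · intro s hs
    simp only [mem_filter, mem_powerset] at hs
    rw [← card_union_of_disjoint (huv.mono inter_subset_right inter_subset_right),
      ← inter_union_distrib_left, inter_eq_left.2 hs.1]

variable [Fintype α]

theorem invariantSubsetGF_univ (σ : Perm α) (x : R) :
    σ.invariantSubsetGF univ x =
      σ.invariantSubsetGF σ.support x * (1 + x) ^ (Fintype.card α - #σ.support) := by
  have hfix : ∀ y ∈ σ.supportᶜ, σ y = y := fun y hy => notMem_support.1 (mem_compl.1 hy)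
  rw [← union_compl σ.support, invariantSubsetGF_union disjoint_compl_right
    (fun y hy => apply_mem_support.2 hy) (fun y hy => (hfix y hy).symm ▸ hy),
    invariantSubsetGF_of_forall_apply_eq hfix, card_compl]

theorem Disjoint.invariantSubsetGF_support_mul {c τ : Perm α} (h : c.Disjoint τ) (x : R) :
    (c * τ).invariantSubsetGF (c * τ).support x =
      c.invariantSubsetGF c.support x * τ.invariantSubsetGF τ.support x := by
  have hc : ∀ y ∈ c.support, (c * τ) y = c y := fun y hy => by
    rw [mul_apply, notMem_support.1 (h.mem_imp hy)]
  have hτ : ∀ y ∈ τ.support, (c * τ) y = τ y := fun y hy => by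
    rw [h.commute.eq, mul_apply, notMem_support.1 (h.symm.mem_imp hy)]
  rw [h.support_mul, invariantSubsetGF_union h.disjoint_support
      (fun y hy => (hc y hy).symm ▸ apply_mem_support.2 hy)
      (fun y hy => (hτ y hy).symm ▸ apply_mem_support.2 hy),
    invariantSubsetGF_congr hc, invariantSubsetGF_congr hτ]

theorem IsCycle.invariantSubsetGF_support {c : Perm α} (hc : c.IsCycle) (x : R) :
    c.invariantSubsetGF c.support x = 1 + x ^ #c.support := by
  have hinv : {s ∈ c.support.powerset | s.image c = s} = {∅, c.support} := by
    ext s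
    simp only [mem_filter, mem_powerset, mem_insert, mem_singleton, image_eq_self_iff_mapsTo]
    constructor
    · rintro ⟨hsub, hs⟩
      refine s.eq_empty_or_nonempty.imp_right fun ⟨y, hy⟩ => ?_
      exact hsub.antisymm (hc.support_subset_of_mapsTo hs hy (hsub hy))
    · rintro (rfl | rfl)
      · simp
      · exact ⟨subset_rfl, fun y hy => apply_mem_support.2 hy⟩
  rw [invariantSubsetGF, hinv, sum_pair hc.nonempty_support.ne_empty.symm, card_empty, pow_zero]

theorem invariantSubsetGF_support_eq_prod (σ : Perm α) (x : R) :
    σ.invariantSubsetGF σ.support x = (σ.cycleType.map (1 + x ^ ·)).prod := by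
  induction σ using cycle_induction_on with
  | base_one => simp [invariantSubsetGF]
  | base_cycles c hc => simp [hc.cycleType, hc.invariantSubsetGF_support]
  | induction_disjoint c τ hd _ hc hτ =>
    rw [hd.invariantSubsetGF_support_mul, hd.cycleType_mul, Multiset.map_add,
      Multiset.prod_add, hc, hτ]

theorem invariantSubsetGF_univ_eq_prod (σ : Perm α) (x : R) :
    σ.invariantSubsetGF univ x = (σ.partition.parts.map (1 + x ^ ·)).prod := by
  simp [parts_partition, invariantSubsetGF_univ, invariantSubsetGF_support_eq_prod]

theorem invariantSubsetGF_univ_eq_sum_range (σ : Perm α) (x : R) :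
    σ.invariantSubsetGF univ x =
      ∑ i ∈ range (Fintype.card α + 1), #{s : Finset α | #s = i ∧ s.image σ = s} • x ^ i := by
  rw [invariantSubsetGF, powerset_univ, ← sum_fiberwise_of_maps_to (g := card)
    fun s _ => mem_range_succ_iff.2 (card_le_univ s)]
  refine sum_congr rfl fun i _ => ?_
  rw [filter_filter, sum_congr (filter_congr fun s _ => and_comm) fun s hs => by
    rw [(mem_filter.1 hs).2.1], sum_const]

end InvariantSubsets

section Determinant

variable [CommRing R]

variable (R) in
/-- Unlike `permMatrix`, this makes `det (1 - t • ·)` exactly multiplicative on disjoint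
permutations; the fixed points come back as a diagonal factor in `one_sub_smul_permMatrix`. -/
def offDiagPermMatrix (σ : Perm α) : Matrix α α R :=
  of fun i j => if σ i = j ∧ i ≠ j then 1 else 0

theorem Disjoint.offDiagPermMatrix_add {c τ : Perm α} (h : c.Disjoint τ) :
    c.offDiagPermMatrix R + τ.offDiagPermMatrix R = (c * τ).offDiagPermMatrix R := by
  ext i j
  simp only [offDiagPermMatrix, of_apply, Matrix.add_apply, mul_apply]
  have hi := h i
  have hτi := h (τ i)
  split_ifs <;> grind [EmbeddingLike.apply_eq_iff_eq]

@[simp]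
theorem offDiagPermMatrix_one : (1 : Perm α).offDiagPermMatrix R = 0 := by
  ext
  simp [offDiagPermMatrix]

variable [Fintype α]

theorem Disjoint.offDiagPermMatrix_mul {c τ : Perm α} (h : c.Disjoint τ) :
    c.offDiagPermMatrix R * τ.offDiagPermMatrix R = 0 := by
  ext i j
  refine sum_eq_zero fun k _ => ?_
  simp only [offDiagPermMatrix, of_apply, mul_ite, mul_one, mul_zero]
  have hk := h k
  grind [EmbeddingLike.apply_eq_iff_eq]

theorem Disjoint.det_one_sub_smul_offDiagPermMatrix_mul {c τ : Perm α} (h : c.Disjoint τ)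
    (t : R) : det (1 - t • (c * τ).offDiagPermMatrix R) =
      det (1 - t • c.offDiagPermMatrix R) * det (1 - t • τ.offDiagPermMatrix R) := by
  rw [← det_mul, sub_mul, one_mul, mul_sub, mul_one, smul_mul_smul, h.offDiagPermMatrix_mul,
    smul_zero, sub_zero, ← h.offDiagPermMatrix_add, smul_add, sub_sub, add_comm]

theorem IsCycle.eq_one_or_eq_of_forall_apply_eq_or {c π : Perm α} (hc : c.IsCycle)
    (h : ∀ i, π i = i ∨ π i = c i) : π = 1 ∨ π = c := by
  refine or_iff_not_imp_left.2 fun hπ => ?_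
  obtain ⟨y, hy⟩ : ∃ y, π y ≠ y := by
    by_contra! h'
    exact hπ (Perm.ext h')
  have hyc : π y = c y := (h y).resolve_left hy
  have hy_supp : y ∈ c.support := by rwa [mem_support, ← hyc]
  set s := {i ∈ c.support | π i = c i}
  have hs : Set.MapsTo c s s := by
    intro i hi
    simp only [s, coe_filter, Set.mem_ofPred_eq, mem_support] at hi ⊢
    refine ⟨fun hci => hi.1 (c.injective hci), (h (c i)).resolve_left fun hπc => hi.1 ?_⟩
    exact π.injective (hπc.trans hi.2.symm)
  have hsupp : c.support ⊆ s :=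
    hc.support_subset_of_mapsTo hs (mem_filter.2 ⟨hy_supp, hyc⟩) hy_supp
  ext i
  by_cases hi : i ∈ c.support
  · exact (mem_filter.1 (hsupp hi)).2
  · have hci : c i = i := notMem_support.1 hi
    rcases h i with h' | h' <;> simp [h', hci]

theorem IsCycle.det_one_sub_smul_offDiagPermMatrix {c : Perm α} (hc : c.IsCycle) (t : R) :
    det (1 - t • c.offDiagPermMatrix R) = 1 - t ^ #c.support := by
  have hentry : ∀ i j, (1 - t • c.offDiagPermMatrix R) i j =
      if i = j then 1 else if c i = j then -t else 0 := by
    intro i j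
    by_cases hij : i = j <;> by_cases hcij : c i = j <;> simp [offDiagPermMatrix, hij, hcij]
  rw [← det_transpose, det_apply, sum_eq_add_of_mem 1 c (mem_univ _) (mem_univ _) hc.ne_one.symm]
  · have hfactor : ∀ i, (if i = c i then 1 else -t) = if i ∈ c.support then -t else 1 :=
      fun i => by simp [mem_support, ite_not, eq_comm]
    simp only [transpose_apply, hentry, coe_one, id_eq, if_true, prod_const_one, hfactor,
      prod_ite_mem, univ_inter, prod_const, hc.sign, sign_one, one_smul, Units.smul_def]
    rw [Units.val_neg, Units.val_pow_eq_pow_val, Units.val_neg, Units.val_one, neg_smul,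
      neg_pow t, zsmul_eq_mul]
    push_cast
    rw [← mul_assoc, ← mul_pow, neg_one_mul, neg_neg, one_pow, one_mul, sub_eq_add_neg]
  · intro π _ hπ
    obtain ⟨i, hi⟩ : ∃ i, π i ≠ i ∧ π i ≠ c i := by
      by_contra! hπ'
      exact (hc.eq_one_or_eq_of_forall_apply_eq_or fun i => or_iff_not_imp_left.2 (hπ' i)).elim
        hπ.1 hπ.2
    rw [prod_eq_zero (mem_univ i), smul_zero]
    rw [transpose_apply, hentry, if_neg (Ne.symm hi.1), if_neg (Ne.symm hi.2)]

theorem det_one_sub_smul_offDiagPermMatrix (σ : Perm α) (t : R) :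
    det (1 - t • σ.offDiagPermMatrix R) = (σ.cycleType.map (1 - t ^ ·)).prod := by
  induction σ using cycle_induction_on with
  | base_one => simp [offDiagPermMatrix_one]
  | base_cycles c hc => simp [hc.cycleType, hc.det_one_sub_smul_offDiagPermMatrix]
  | induction_disjoint c τ hd _ hc hτ =>
    rw [hd.det_one_sub_smul_offDiagPermMatrix_mul, hd.cycleType_mul, Multiset.map_add,
      Multiset.prod_add, hc, hτ]

theorem one_sub_smul_permMatrix (σ : Perm α) (t : R) :
    1 - t • σ.permMatrix R =
      (1 - t • σ.offDiagPermMatrix R) * diagonal fun i => if i ∈ σ.support then 1 else 1 - t := by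
  ext i j
  rw [mul_diagonal]
  by_cases hij : i = j
  · subst hij
    by_cases hσ : σ i = i <;> simp [offDiagPermMatrix, hσ]
  · by_cases hσ : σ i = j
    · have hσj : σ j ≠ j := fun h => hij (σ.injective (hσ.trans h.symm))
      simp [offDiagPermMatrix, hij, hσ, hσj]
    · simp [offDiagPermMatrix, hij, hσ]

theorem det_one_sub_smul_permMatrix (σ : Perm α) (t : R) :
    det (1 - t • σ.permMatrix R) = (σ.partition.parts.map (1 - t ^ ·)).prod := by
  rw [one_sub_smul_permMatrix, det_mul, det_diagonal, det_one_sub_smul_offDiagPermMatrix,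
    prod_ite, prod_const_one, one_mul, prod_const, parts_partition, Multiset.map_add,
    Multiset.prod_add, Multiset.map_replicate, Multiset.prod_replicate, pow_one, ← card_compl]
  congr 3
  ext
  simp

end Determinant

end Equiv.Perm

/-- third Lemma in the proof of Theorem 3, in denominator-cleared form.
For a permutation `σ` of an `m`-element set `X` with permutation matrix `P` and `N i` the
number of `i`-element subsets `s` of `X` with `s.image σ = s`, in `Polynomial ℤ` we have
`(∑_{i=0}^{m} N_i • X^i) ⬝ det(1 - X • P) = det(1 - X² • P)`. -/
theorem stmt_8 (X : Type*) [Fintype X] [DecidableEq X] (m : ℕ) (hm : Fintype.card X = m)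
    (σ : Equiv.Perm X) (P : Matrix X X ℤ)
    (hP : ∀ x y, P x y = if σ y = x then 1 else 0)
    (N : ℕ → ℕ)
    (hN : ∀ i, N i =
      (Finset.univ.filter fun s : Finset X => s.card = i ∧ s.image σ = s).card) :
    (∑ i ∈ Finset.range (m + 1), (N i : ℤ) • (Polynomial.X : Polynomial ℤ) ^ i) *
        Matrix.det ((1 : Matrix X X (Polynomial ℤ)) -
          (Polynomial.X : Polynomial ℤ) • P.map Polynomial.C) =
      Matrix.det ((1 : Matrix X X (Polynomial ℤ)) -
        ((Polynomial.X : Polynomial ℤ) ^ 2) • P.map Polynomial.C) := by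
  subst hm
  have hPσ : P.map Polynomial.C = (σ.permMatrix (Polynomial ℤ))ᵀ := by
    ext x y
    simp [hP, apply_ite Polynomial.C]
  have hdet : ∀ t : Polynomial ℤ, det (1 - t • P.map Polynomial.C) =
      (σ.partition.parts.map (1 - t ^ ·)).prod := fun t => by
    rw [hPσ, ← transpose_one, ← transpose_smul, ← transpose_sub, det_transpose,
      σ.det_one_sub_smul_permMatrix]
  simp_rw [hN, natCast_zsmul, ← σ.invariantSubsetGF_univ_eq_sum_range, hdet,
    σ.invariantSubsetGF_univ_eq_prod, ← Multiset.prod_map_mul]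
  congr 1
  refine Multiset.map_congr rfl fun k _ => ?_
  ring
end

section
/- Fix natural numbers n and i, and let E := {e : Sym2 (Fin n) // ¬ e.IsDiag} with Equiv.Perm (Fin n) acting on E via σ • e = Sym2.map σ e. Let a_{n,i} be the number of isomorphism classes of simple graphs on Fin n with exactly i edges (the cardinality of the quotient of {G : SimpleGraph (Fin n) // G.edgeFinset.card = i} by G ~ G' ↔ Nonempty (G ≃g G')). Then n! * a_{n,i} = ∑ over σ ∈ Equiv.Perm (Fin n) of the number of i-element subsets s of E with s.image (σ • ·) = s. -/
open scoped Classical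

section aux
variable {n i : ℕ}

lemma edgePerm_one : edgePerm (1 : Equiv.Perm (Fin n)) = 1 := by
  ext e; simp [edgePerm]

lemma edgePerm_mul (σ τ : Equiv.Perm (Fin n)) :
    edgePerm (σ * τ) = edgePerm σ * edgePerm τ := by
  ext e
  simp [edgePerm, Sym2.map_map]

/-- The set of i-edge subsets. -/
abbrev ESets (n i : ℕ) := {s : Finset (Edges n) // s.card = i}

noncomputable instance : MulAction (Equiv.Perm (Fin n)) (ESets n i) where
  smul σ s := ⟨s.1.image (edgePerm σ), by
    rw [Finset.card_image_of_injective _ (edgePerm σ).injective, s.2]⟩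
  one_smul s := by
    apply Subtype.ext
    show s.1.image (edgePerm 1) = s.1
    simp [edgePerm_one]
  mul_smul σ τ s := by
    apply Subtype.ext
    show s.1.image (edgePerm (σ * τ)) = (s.1.image (edgePerm τ)).image (edgePerm σ)
    rw [edgePerm_mul, Finset.image_image]
    rfl

lemma smul_val (σ : Equiv.Perm (Fin n)) (s : ESets n i) :
    (σ • s).1 = s.1.image (edgePerm σ) := rfl

/-- Graphs with i edges. -/
abbrev GSet (n i : ℕ) := {G : SimpleGraph (Fin n) // G.edgeFinset.card = i}

noncomputable def graphToEdges (G : SimpleGraph (Fin n)) : Finset (Edges n) :=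
  G.edgeFinset.attach.map
    ⟨fun e => ⟨e.1, G.not_isDiag_of_mem_edgeSet (SimpleGraph.mem_edgeFinset.mp e.2)⟩,
     fun a b h => by
      apply Subtype.ext
      have := congrArg Subtype.val h
      simpa using this⟩

lemma mem_graphToEdges {G : SimpleGraph (Fin n)} (e : Edges n) :
    e ∈ graphToEdges G ↔ e.1 ∈ G.edgeSet := by
  simp only [graphToEdges, Finset.mem_map, Finset.mem_attach, true_and, Subtype.exists,
    Function.Embedding.coeFn_mk]
  constructor
  · rintro ⟨a, ha, rfl⟩
    exact SimpleGraph.mem_edgeFinset.mp ha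
  · intro h
    exact ⟨e.1, SimpleGraph.mem_edgeFinset.mpr h, rfl⟩

lemma card_graphToEdges (G : SimpleGraph (Fin n)) :
    (graphToEdges G).card = G.edgeFinset.card := by
  simp [graphToEdges]

noncomputable def edgesToGraph (s : Finset (Edges n)) : SimpleGraph (Fin n) :=
  SimpleGraph.fromEdgeSet ↑(s.image (·.1))

lemma edgeSet_edgesToGraph (s : Finset (Edges n)) :
    (edgesToGraph s).edgeSet = ↑(s.image (·.1)) := by
  rw [edgesToGraph, SimpleGraph.edgeSet_fromEdgeSet]
  ext e
  simp only [Set.mem_diff, Finset.coe_image, Set.mem_image, Finset.mem_coe, Set.mem_setOf_eq]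
  constructor
  · rintro ⟨h, _⟩; exact h
  · rintro ⟨⟨a, ha⟩, _, rfl⟩
    exact ⟨⟨⟨a, ha⟩, ‹_›, rfl⟩, ha⟩

lemma graphToEdges_edgesToGraph (s : Finset (Edges n)) :
    graphToEdges (edgesToGraph s) = s := by
  ext e
  rw [mem_graphToEdges, edgeSet_edgesToGraph]
  simp only [Finset.coe_image, Set.mem_image, Finset.mem_coe]
  constructor
  · rintro ⟨a, ha, h⟩; rwa [Subtype.ext h] at ha
  · intro h; exact ⟨e, h, rfl⟩

lemma edgesToGraph_graphToEdges (G : SimpleGraph (Fin n)) :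
    edgesToGraph (graphToEdges G) = G := by
  apply SimpleGraph.edgeSet_injective
  rw [edgeSet_edgesToGraph]
  ext e
  simp only [Finset.coe_image, Set.mem_image, Finset.mem_coe]
  constructor
  · rintro ⟨a, ha, rfl⟩; exact (mem_graphToEdges a).mp ha
  · intro h
    exact ⟨⟨e, G.not_isDiag_of_mem_edgeSet h⟩, (mem_graphToEdges _).mpr h, rfl⟩

noncomputable def geEquiv (n i : ℕ) : GSet n i ≃ ESets n i where
  toFun G := ⟨graphToEdges G.1, by rw [card_graphToEdges, G.2]⟩
  invFun s := ⟨edgesToGraph s.1, by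
    rw [← card_graphToEdges, graphToEdges_edgesToGraph, s.2]⟩
  left_inv G := Subtype.ext (edgesToGraph_graphToEdges G.1)
  right_inv s := Subtype.ext (graphToEdges_edgesToGraph s.1)

lemma mem_edgeSet_map (σ : Equiv.Perm (Fin n)) {G G' : SimpleGraph (Fin n)}
    (h : ∀ a b, G.Adj a b ↔ G'.Adj (σ a) (σ b)) (e : Sym2 (Fin n)) :
    e ∈ G.edgeSet ↔ Sym2.map σ e ∈ G'.edgeSet := by
  induction e with
  | _ x y =>
    simp only [SimpleGraph.mem_edgeSet, Sym2.map_pair_eq]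
    exact h x y

lemma graphToEdges_image (σ : Equiv.Perm (Fin n)) (G G' : SimpleGraph (Fin n))
    (h : ∀ a b, G.Adj a b ↔ G'.Adj (σ a) (σ b)) :
    (graphToEdges G).image (edgePerm σ) = graphToEdges G' := by
  ext e
  simp only [Finset.mem_image]
  constructor
  · rintro ⟨a, ha, rfl⟩
    rw [mem_graphToEdges] at ha ⊢
    exact (mem_edgeSet_map σ h a.1).mp ha
  · intro he
    refine ⟨(edgePerm σ).symm e, ?_, by simp⟩
    rw [mem_graphToEdges] at he ⊢
    show Sym2.map σ.symm e.1 ∈ G.edgeSet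
    rw [mem_edgeSet_map σ h]
    simpa [Sym2.map_map] using he

lemma iso_iff_exists (G G' : GSet n i) :
    Nonempty (G.1 ≃g G'.1) ↔ ∃ σ : Equiv.Perm (Fin n), σ • geEquiv n i G = geEquiv n i G' := by
  constructor
  · rintro ⟨φ⟩
    refine ⟨φ.toEquiv, Subtype.ext ?_⟩
    rw [smul_val]
    exact graphToEdges_image _ _ _ (fun a b => (φ.map_adj_iff).symm)
  · rintro ⟨σ, hσ⟩
    replace hσ := congrArg Subtype.val hσ
    rw [smul_val] at hσ
    simp only [geEquiv, Equiv.coe_fn_mk] at hσ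
    have key : ∀ e : Edges n, e ∈ graphToEdges G.1 ↔ edgePerm σ e ∈ graphToEdges G'.1 := by
      intro e
      rw [← hσ, Finset.mem_image]
      constructor
      · exact fun h => ⟨e, h, rfl⟩
      · rintro ⟨a, ha, h⟩
        rwa [(edgePerm σ).injective h] at ha
    have hadj : ∀ a b, G.1.Adj a b ↔ G'.1.Adj (σ a) (σ b) := by
      intro a b
      constructor
      · intro hab
        have h1 := (key ⟨s(a, b), by simp [hab.ne]⟩).mp
          ((mem_graphToEdges _).mpr ((G.1.mem_edgeSet).mpr hab))
        have h2 := (mem_graphToEdges _).mp h1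
        simpa [edgePerm] using h2
      · intro hab
        have hne : a ≠ b := fun h => hab.ne (congrArg σ h)
        have h1 : edgePerm σ ⟨s(a, b), by simp [hne]⟩ ∈ graphToEdges G'.1 := by
          rw [mem_graphToEdges]
          show Sym2.map σ s(a, b) ∈ G'.1.edgeSet
          simpa using hab
        have h2 := (key ⟨s(a, b), by simp [hne]⟩).mpr h1
        simpa using (mem_graphToEdges _).mp h2
    exact ⟨⟨σ, fun {a b} => (hadj a b).symm⟩⟩

end aux

/-- coefficient form of the main formula: Theorem 3(i) together with
Theorem 2, i.e. Burnside's lemma for the pair group.  `n!` times the number of isomorphism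
classes of simple graphs on `n` vertices with `i` edges equals the total number, over all
vertex permutations `σ`, of `i`-element subsets of the edge set fixed (setwise) by `σ`. -/
theorem stmt_10 (n i : ℕ) :
    n.factorial * Nat.card (Quotient (graphIsoSetoid n i)) =
      ∑ σ : Equiv.Perm (Fin n),
        (Finset.univ.filter fun s : Finset (Edges n) =>
          s.card = i ∧ s.image (edgePerm σ) = s).card := by
  classical
  have burnside := MulAction.sum_card_fixedBy_eq_card_orbits_mul_card_group
    (Equiv.Perm (Fin n)) (ESets n i)
  have hquot : Quotient (graphIsoSetoid n i) ≃
      Quotient (MulAction.orbitRel (Equiv.Perm (Fin n)) (ESets n i)) := by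
    refine Quotient.congr (geEquiv n i) (fun G G' => ?_)
    show Nonempty (G.1 ≃g G'.1) ↔ _
    rw [MulAction.orbitRel_apply, MulAction.mem_orbit_iff]
    constructor
    · rintro ⟨φ⟩
      exact (iso_iff_exists G' G).mp ⟨φ.symm⟩
    · rintro ⟨σ, hσ⟩
      obtain ⟨φ⟩ := (iso_iff_exists G' G).mpr ⟨σ, hσ⟩
      exact ⟨φ.symm⟩
  have hcard : Nat.card (Quotient (graphIsoSetoid n i)) =
      Fintype.card (Quotient (MulAction.orbitRel (Equiv.Perm (Fin n)) (ESets n i))) := by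
    rw [Nat.card_congr hquot, Nat.card_eq_fintype_card]
  have hfact : Fintype.card (Equiv.Perm (Fin n)) = n.factorial := by
    simp [Fintype.card_perm]
  rw [hcard, mul_comm, ← hfact, ← burnside]
  refine Finset.sum_congr rfl (fun σ _ => ?_)
  have : Fintype.card (MulAction.fixedBy (ESets n i) σ) =
      Fintype.card {s : Finset (Edges n) // s.card = i ∧ s.image (edgePerm σ) = s} := by
    refine Fintype.card_congr ⟨fun x => ⟨x.1.1, x.1.2, ?_⟩, fun s => ⟨⟨s.1, s.2.1⟩, ?_⟩, ?_, ?_⟩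
    · have hx := x.2
      rw [MulAction.mem_fixedBy] at hx
      exact congrArg Subtype.val hx
    · rw [MulAction.mem_fixedBy]
      exact Subtype.ext s.2.2
    · intro x; rfl
    · intro s; rfl
  rw [this, Fintype.card_subtype]
end
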